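/- arXiv:1706.06722 — 8 statements merged into one kernel-verified Lean document; each statement's English description precedes it below -/
import Mathlib

section
/- Let (X, ‖·‖, ≼) be a normal partially ordered Banach space and D a nonempty closed inductive subset of X. Let T be an isotone and δ-compact set-valued mapping from D to nonempty closed bounded subsets of D. Suppose there exist points x₀ ∈ D and x₁ ∈ T x₀ with x₀ ≼ x₁. Then the fixed point set 𝔉(T) = {x ∈ D : x ∈ T x} is a nonempty chain-complete subset of D, and T has an ≼-maximal fixed point. (Theorem 3.6 (a), (a')) -/
/-!
Iterating `T` from `x₀` produces an increasing sequence `xₙ₊₁ ∈ T xₙ`, bounded above by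
inductivity of `D`, hence norm-bounded by normality; its tail lies in `T` of a bounded set, so it
has compact closure. In a compact chain the closed cone yields a greatest element, which is then
the only cluster point of the sequence, so the sequence converges, and δ-continuity makes the
limit a fixed point. The same compactness argument applied to a chain of fixed points (cut below
one of its members, so that it lies in an order interval) gives its supremum as a limit of fixed
points, hence a fixed point. Zorn's lemma then provides a maximal fixed point.
-/

/-- The partial order on a Banach space induced by a cone `K`: `x ≼ y` iff `y - x ∈ K`. -/
def coneLe {X : Type*} [NormedAddCommGroup X] (K : Set X) (x y : X) : Prop := y - x ∈ K

open Filter Metric Set Topology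

section ConeOrder

variable {X : Type*} [NormedAddCommGroup X] {K : Set X}

lemma coneLe_refl (hK0 : (0 : X) ∈ K) (x : X) : coneLe K x x := by
  simpa [coneLe] using hK0

lemma coneLe_trans (hKadd : ∀ x ∈ K, ∀ y ∈ K, x + y ∈ K) {x y z : X}
    (hxy : coneLe K x y) (hyz : coneLe K y z) : coneLe K x z := by
  simpa [coneLe] using hKadd _ hyz _ hxy

lemma coneLe_antisymm (hKpointed : ∀ x ∈ K, -x ∈ K → x = 0) {x y : X}
    (hxy : coneLe K x y) (hyx : coneLe K y x) : x = y :=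
  (sub_eq_zero.1 (hKpointed _ hxy (by simpa [coneLe] using hyx))).symm

lemma coneLe_of_le_succ (hK0 : (0 : X) ∈ K) (hKadd : ∀ x ∈ K, ∀ y ∈ K, x + y ∈ K)
    {u : ℕ → X} (hu : ∀ n, coneLe K (u n) (u (n + 1))) {m n : ℕ} (hmn : m ≤ n) :
    coneLe K (u m) (u n) := by
  induction n, hmn using Nat.le_induction with
  | base => exact coneLe_refl hK0 _
  | succ n _ ih => exact coneLe_trans hKadd ih (hu n)

lemma isChain_range_of_le_succ (hK0 : (0 : X) ∈ K) (hKadd : ∀ x ∈ K, ∀ y ∈ K, x + y ∈ K)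
    {u : ℕ → X} (hu : ∀ n, coneLe K (u n) (u (n + 1))) : IsChain (coneLe K) (range u) := by
  rintro _ ⟨m, rfl⟩ _ ⟨n, rfl⟩ -
  rcases le_total m n with h | h
  · exact Or.inl (coneLe_of_le_succ hK0 hKadd hu h)
  · exact Or.inr (coneLe_of_le_succ hK0 hKadd hu h)

lemma isClosed_setOf_coneLe (hK : IsClosed K) : IsClosed {p : X × X | coneLe K p.1 p.2} :=
  hK.preimage (continuous_snd.sub continuous_fst)

lemma isClosed_setOf_coneLe_const (hK : IsClosed K) (b : X) : IsClosed {x | coneLe K x b} :=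
  (isClosed_setOf_coneLe hK).preimage (continuous_id.prodMk continuous_const)

lemma isClosed_setOf_const_coneLe (hK : IsClosed K) (a : X) : IsClosed {x | coneLe K a x} :=
  (isClosed_setOf_coneLe hK).preimage (continuous_const.prodMk continuous_id)

lemma IsChain.closure_coneLe (hK : IsClosed K) (hK0 : (0 : X) ∈ K) {C : Set X}
    (hC : IsChain (coneLe K) C) : IsChain (coneLe K) (closure C) := by
  have hclosed : IsClosed {p : X × X | coneLe K p.1 p.2 ∨ coneLe K p.2 p.1} :=
    (isClosed_setOf_coneLe hK).union (hK.preimage (continuous_fst.sub continuous_snd))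
  have hsub : C ×ˢ C ⊆ {p : X × X | coneLe K p.1 p.2 ∨ coneLe K p.2 p.1} := by
    rintro ⟨p, q⟩ ⟨hp, hq⟩
    rcases eq_or_ne p q with rfl | hpq
    · exact Or.inl (coneLe_refl hK0 p)
    · exact hC hp hq hpq
  intro p hp q hq _
  exact hclosed.closure_subset_iff.2 hsub (show (p, q) ∈ closure (C ×ˢ C) by
    rw [closure_prod_eq]; exact ⟨hp, hq⟩)

/-- The sets `{x ∈ C | y ≼ x}`, `y ∈ C`, are compact and directed, so they have a common point. -/
lemma IsCompact.exists_forall_coneLe_of_isChain (hK : IsClosed K) (hK0 : (0 : X) ∈ K)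
    (hKadd : ∀ x ∈ K, ∀ y ∈ K, x + y ∈ K) {C : Set X} (hC : IsCompact C) (hne : C.Nonempty)
    (hchain : IsChain (coneLe K) C) : ∃ s ∈ C, ∀ c ∈ C, coneLe K c s := by
  have : Nonempty C := hne.to_subtype
  let Z : C → Set X := fun y => C ∩ {x | coneLe K y.1 x}
  have hZclosed : ∀ y, IsClosed (Z y) := fun y =>
    hC.isClosed.inter (isClosed_setOf_const_coneLe hK y.1)
  have hZdir : Directed (· ⊇ ·) Z := by
    intro y₁ y₂
    rcases eq_or_ne y₁.1 y₂.1 with h | h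
    · obtain rfl := Subtype.ext h
      exact ⟨y₁, subset_rfl, subset_rfl⟩
    rcases hchain y₁.2 y₂.2 h with h | h
    · exact ⟨y₂, fun x hx => ⟨hx.1, coneLe_trans hKadd h hx.2⟩, subset_rfl⟩
    · exact ⟨y₁, subset_rfl, fun x hx => ⟨hx.1, coneLe_trans hKadd h hx.2⟩⟩
  obtain ⟨s, hs⟩ := IsCompact.nonempty_iInter_of_directed_nonempty_isCompact_isClosed Z hZdir
    (fun y => ⟨y.1, y.2, coneLe_refl hK0 _⟩)
    (fun y => hC.of_isClosed_subset (hZclosed y) inter_subset_left) hZclosed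
  obtain ⟨c₀, hc₀⟩ := hne
  exact ⟨s, (mem_iInter.1 hs ⟨c₀, hc₀⟩).1, fun c hc => (mem_iInter.1 hs ⟨c, hc⟩).2⟩

lemma exists_lub_mem_closure_of_isChain (hK : IsClosed K) (hK0 : (0 : X) ∈ K)
    (hKadd : ∀ x ∈ K, ∀ y ∈ K, x + y ∈ K) {C : Set X} (hne : C.Nonempty)
    (hchain : IsChain (coneLe K) C) (hC : IsCompact (closure C)) :
    ∃ s ∈ closure C, (∀ c ∈ closure C, coneLe K c s) ∧
      ∀ b, (∀ c ∈ C, coneLe K c b) → coneLe K s b := by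
  obtain ⟨s, hs, hub⟩ := hC.exists_forall_coneLe_of_isChain hK hK0 hKadd hne.closure
    (hchain.closure_coneLe hK hK0)
  exact ⟨s, hs, hub, fun b hb => (isClosed_setOf_coneLe_const hK b).closure_subset_iff.2 hb hs⟩

lemma exists_tendsto_of_le_succ_of_isCompact_closure (hK : IsClosed K) (hK0 : (0 : X) ∈ K)
    (hKadd : ∀ x ∈ K, ∀ y ∈ K, x + y ∈ K) (hKpointed : ∀ x ∈ K, -x ∈ K → x = 0)
    {u : ℕ → X} (hu : ∀ n, coneLe K (u n) (u (n + 1))) (hc : IsCompact (closure (range u))) :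
    ∃ s, Tendsto u atTop (𝓝 s) := by
  obtain ⟨s, -, hub, hleast⟩ := exists_lub_mem_closure_of_isChain hK hK0 hKadd
    (range_nonempty u) (isChain_range_of_le_succ hK0 hKadd hu) hc
  refine ⟨s, hc.tendsto_nhds_of_unique_mapClusterPt
    (Eventually.of_forall fun n => subset_closure (mem_range_self n)) fun q hq hcluster => ?_⟩
  have hq_ub : ∀ c ∈ range u, coneLe K c q := by
    rintro _ ⟨n, rfl⟩
    exact (isClosed_setOf_const_coneLe hK (u n)).mem_of_mapClusterPt hcluster
      ((eventually_ge_atTop n).mono fun m hm => coneLe_of_le_succ hK0 hKadd hu hm)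
  exact coneLe_antisymm hKpointed (hub q hq) (hleast q hq_ub)

lemma isBounded_setOf_coneLe_and_coneLe {l : ℝ}
    (hnormal : ∀ x y : X, x ∈ K → y - x ∈ K → ‖x‖ ≤ l * ‖y‖) (a b : X) :
    Bornology.IsBounded {x | coneLe K a x ∧ coneLe K x b} := by
  refine (isBounded_closedBall (x := a) (r := l * ‖b - a‖)).subset fun x hx => ?_
  rw [mem_closedBall, dist_eq_norm]
  exact hnormal _ _ hx.1 (by simpa [coneLe] using hx.2)

end ConeOrder

lemma mem_of_tendsto_of_tendsto_hausdorffDist {X : Type*} [PseudoMetricSpace X]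
    {A : ℕ → Set X} {B : Set X} {v : ℕ → X} {s : X}
    (hA : ∀ n, (A n).Nonempty ∧ Bornology.IsBounded (A n)) (hBne : B.Nonempty)
    (hBbdd : Bornology.IsBounded B) (hBclosed : IsClosed B) (hv : ∀ n, v n ∈ A n)
    (hvs : Tendsto v atTop (𝓝 s)) (hAB : Tendsto (fun n => hausdorffDist (A n) B) atTop (𝓝 0)) :
    s ∈ B := by
  have hle : ∀ n, infDist (v n) B ≤ hausdorffDist (A n) B := fun n =>
    infDist_le_hausdorffDist_of_mem (hv n)
      (hausdorffEDist_ne_top_of_nonempty_of_bounded (hA n).1 hBne (hA n).2 hBbdd)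
  have hzero : Tendsto (fun n => infDist (v n) B) atTop (𝓝 0) :=
    squeeze_zero (fun _ => infDist_nonneg) hle hAB
  have hlim : Tendsto (fun n => infDist (v n) B) atTop (𝓝 (infDist s B)) :=
    ((continuous_infDist_pt B).tendsto s).comp hvs
  exact (hBclosed.mem_iff_infDist_zero hBne).2 (tendsto_nhds_unique hlim hzero)

section SetValued

variable {X : Type*} [NormedAddCommGroup X] {K : Set X} {D : Set X} {T : X → Set X}

lemma mem_self_of_tendsto (hDclosed : IsClosed D)
    (hTval : ∀ x ∈ D, (T x).Nonempty ∧ IsClosed (T x) ∧ Bornology.IsBounded (T x))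
    (hTcont : ∀ (u : ℕ → X) (p : X), (∀ n, u n ∈ D) → p ∈ D →
      Tendsto u atTop (𝓝 p) → Tendsto (fun n => hausdorffDist (T (u n)) (T p)) atTop (𝓝 0))
    {u v : ℕ → X} {s : X} (hu : ∀ n, u n ∈ D) (hv : ∀ n, v n ∈ T (u n))
    (hus : Tendsto u atTop (𝓝 s)) (hvs : Tendsto v atTop (𝓝 s)) : s ∈ D ∧ s ∈ T s := by
  have hsD : s ∈ D := hDclosed.mem_of_tendsto hus (Eventually.of_forall hu)
  obtain ⟨hne, hclosed, hbdd⟩ := hTval s hsD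
  exact ⟨hsD, mem_of_tendsto_of_tendsto_hausdorffDist
    (fun n => ⟨(hTval _ (hu n)).1, (hTval _ (hu n)).2.2⟩) hne hbdd hclosed hv hvs
    (hTcont u s hu hsD hus)⟩

lemma exists_lub_mem_fixedPoints_of_isChain (hK : IsClosed K) (hK0 : (0 : X) ∈ K)
    (hKadd : ∀ x ∈ K, ∀ y ∈ K, x + y ∈ K) {l : ℝ}
    (hnormal : ∀ x y : X, x ∈ K → y - x ∈ K → ‖x‖ ≤ l * ‖y‖) (hDclosed : IsClosed D)
    (hTval : ∀ x ∈ D, (T x).Nonempty ∧ IsClosed (T x) ∧ Bornology.IsBounded (T x))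
    (hTcont : ∀ (u : ℕ → X) (p : X), (∀ n, u n ∈ D) → p ∈ D →
      Tendsto u atTop (𝓝 p) → Tendsto (fun n => hausdorffDist (T (u n)) (T p)) atTop (𝓝 0))
    (hTcomp : ∀ C ⊆ D, Bornology.IsBounded C → IsCompact (closure (⋃ x ∈ C, T x)))
    (C : Set X) (hC : C ⊆ {x | x ∈ D ∧ x ∈ T x}) (hne : C.Nonempty)
    (hchain : IsChain (coneLe K) C) (hbdd : ∃ b, ∀ c ∈ C, coneLe K c b) :
    ∃ s, s ∈ {x | x ∈ D ∧ x ∈ T x} ∧ (∀ c ∈ C, coneLe K c s) ∧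
      ∀ b, (∀ c ∈ C, coneLe K c b) → coneLe K s b := by
  obtain ⟨c₀, hc₀⟩ := hne
  obtain ⟨b, hb⟩ := hbdd
  set C' := C ∩ {x | coneLe K c₀ x}
  have hC'C : C' ⊆ C := inter_subset_left
  have hC'bdd : Bornology.IsBounded C' :=
    (isBounded_setOf_coneLe_and_coneLe hnormal c₀ b).subset fun x hx => ⟨hx.2, hb x hx.1⟩
  have hC'cpt : IsCompact (closure C') :=
    (hTcomp C' (fun x hx => (hC (hC'C hx)).1) hC'bdd).of_isClosed_subset isClosed_closure
      (closure_mono fun x hx => mem_biUnion hx (hC (hC'C hx)).2)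
  obtain ⟨s, hs, hub, hleast⟩ := exists_lub_mem_closure_of_isChain hK hK0 hKadd
    ⟨c₀, show c₀ ∈ C' from ⟨hc₀, coneLe_refl hK0 c₀⟩⟩ (hchain.mono hC'C) hC'cpt
  obtain ⟨u, hu, hus⟩ := mem_closure_iff_seq_limit.1 hs
  refine ⟨s, mem_self_of_tendsto hDclosed hTval hTcont (fun n => (hC (hC'C (hu n))).1)
    (fun n => (hC (hC'C (hu n))).2) hus hus, fun c hc => ?_,
    fun b hb => hleast b fun c hc => hb c (hC'C hc)⟩
  -- `C'` is cofinal in `C`: every member of `C` lies below `c₀` or in `C'`.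
  rcases eq_or_ne c c₀ with rfl | hcc₀
  · exact hub c (subset_closure ⟨hc, coneLe_refl hK0 c⟩)
  rcases hchain hc hc₀ hcc₀ with h | h
  · exact coneLe_trans hKadd h (hub c₀ (subset_closure ⟨hc₀, coneLe_refl hK0 c₀⟩))
  · exact hub c (subset_closure ⟨hc, h⟩)

lemma exists_orbit_coneLe_succ (hTsub : ∀ x ∈ D, T x ⊆ D)
    (hiso : ∀ x ∈ D, ∀ y ∈ D, coneLe K x y → ∀ z ∈ T x, ∃ w ∈ T y, coneLe K z w)
    {x₀ x₁ : X} (hx₀ : x₀ ∈ D) (hx₁ : x₁ ∈ T x₀) (h₀₁ : coneLe K x₀ x₁) :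
    ∃ u : ℕ → X, ∀ n, u n ∈ D ∧ u (n + 1) ∈ T (u n) ∧ coneLe K (u n) (u (n + 1)) := by
  let P : Set (X × X) := {p | p.1 ∈ D ∧ p.2 ∈ T p.1 ∧ coneLe K p.1 p.2}
  have hstep : ∀ p ∈ P, ∃ q ∈ P, q.1 = p.2 := by
    rintro ⟨a, c⟩ ⟨ha, hc, hac⟩
    obtain ⟨w, hw, hcw⟩ := hiso a ha c (hTsub a ha hc) hac c hc
    exact ⟨(c, w), ⟨hTsub a ha hc, hw, hcw⟩, rfl⟩
  choose! f hfP hf using hstep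
  have horbit : ∀ n, f^[n] (x₀, x₁) ∈ P := by
    intro n
    induction n with
    | zero => exact ⟨hx₀, hx₁, h₀₁⟩
    | succ n ih => simpa only [Function.iterate_succ_apply'] using hfP _ ih
  refine ⟨fun n => (f^[n] (x₀, x₁)).1, fun n => ?_⟩
  simp only [Function.iterate_succ_apply', hf _ (horbit n)]
  exact horbit n

lemma exists_fixedPoint (hK : IsClosed K) (hK0 : (0 : X) ∈ K)
    (hKadd : ∀ x ∈ K, ∀ y ∈ K, x + y ∈ K) (hKpointed : ∀ x ∈ K, -x ∈ K → x = 0) {l : ℝ}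
    (hnormal : ∀ x y : X, x ∈ K → y - x ∈ K → ‖x‖ ≤ l * ‖y‖) (hDclosed : IsClosed D)
    (hDind : ∀ C ⊆ D, C.Nonempty → IsChain (coneLe K) C → ∃ b ∈ D, ∀ c ∈ C, coneLe K c b)
    (hTval : ∀ x ∈ D, (T x).Nonempty ∧ IsClosed (T x) ∧ Bornology.IsBounded (T x))
    (hTsub : ∀ x ∈ D, T x ⊆ D)
    (hiso : ∀ x ∈ D, ∀ y ∈ D, coneLe K x y → ∀ z ∈ T x, ∃ w ∈ T y, coneLe K z w)
    (hTcont : ∀ (u : ℕ → X) (p : X), (∀ n, u n ∈ D) → p ∈ D →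
      Tendsto u atTop (𝓝 p) → Tendsto (fun n => hausdorffDist (T (u n)) (T p)) atTop (𝓝 0))
    (hTcomp : ∀ C ⊆ D, Bornology.IsBounded C → IsCompact (closure (⋃ x ∈ C, T x)))
    {x₀ x₁ : X} (hx₀ : x₀ ∈ D) (hx₁ : x₁ ∈ T x₀) (h₀₁ : coneLe K x₀ x₁) :
    ∃ p, p ∈ D ∧ p ∈ T p := by
  obtain ⟨u, hu⟩ := exists_orbit_coneLe_succ hTsub hiso hx₀ hx₁ h₀₁
  have hle : ∀ n, coneLe K (u n) (u (n + 1)) := fun n => (hu n).2.2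
  have huD : range u ⊆ D := range_subset_iff.2 fun n => (hu n).1
  obtain ⟨b, -, hb⟩ := hDind (range u) huD (range_nonempty u)
    (isChain_range_of_le_succ hK0 hKadd hle)
  have hubdd : Bornology.IsBounded (range u) :=
    (isBounded_setOf_coneLe_and_coneLe hnormal (u 0) b).subset <| by
      rintro _ ⟨n, rfl⟩
      exact ⟨coneLe_of_le_succ hK0 hKadd hle n.zero_le, hb _ (mem_range_self n)⟩
  have htail : IsCompact (closure (range fun n => u (n + 1))) :=
    (hTcomp _ huD hubdd).of_isClosed_subset isClosed_closure <| closure_mono <| by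
      rintro _ ⟨n, rfl⟩
      exact mem_biUnion (mem_range_self n) (hu n).2.1
  obtain ⟨s, hs⟩ := exists_tendsto_of_le_succ_of_isCompact_closure hK hK0 hKadd hKpointed
    (fun n => hle (n + 1)) htail
  exact ⟨s, mem_self_of_tendsto hDclosed hTval hTcont (fun n => (hu n).1) (fun n => (hu n).2.1)
    ((tendsto_add_atTop_iff_nat 1).1 hs) hs⟩

end SetValued

lemma exists_maximal_coneLe_of_isChain {X : Type*} [NormedAddCommGroup X] {K : Set X}
    (hK0 : (0 : X) ∈ K) (hKadd : ∀ x ∈ K, ∀ y ∈ K, x + y ∈ K)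
    (hKpointed : ∀ x ∈ K, -x ∈ K → x = 0) {S : Set X} (hS : S.Nonempty)
    (hchain : ∀ C ⊆ S, C.Nonempty → IsChain (coneLe K) C → ∃ b ∈ S, ∀ c ∈ C, coneLe K c b) :
    ∃ m ∈ S, ∀ y ∈ S, coneLe K m y → m = y := by
  let _ : Preorder X :=
    { le := coneLe K
      le_refl := coneLe_refl hK0
      le_trans := fun _ _ _ => coneLe_trans hKadd }
  obtain ⟨x, hx⟩ := hS
  obtain ⟨m, -, hm⟩ := zorn_le_nonempty₀ S (fun C hCS hC y hy => hchain C hCS ⟨y, hy⟩ hC) x hx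
  exact ⟨m, hm.prop, fun y hy hmy => coneLe_antisymm hKpointed hmy (hm.2 hy hmy)⟩

theorem setvalued_fixed_points_chainComplete_of_normal_general
    {X : Type*} [NormedAddCommGroup X]
    (K : Set X) (hKclosed : IsClosed K) (hK0 : (0 : X) ∈ K)
    (hKadd : ∀ x ∈ K, ∀ y ∈ K, x + y ∈ K)
    (hKpointed : ∀ x ∈ K, -x ∈ K → x = 0)
    -- normality of the order
    (hnormal : ∃ l : ℝ, 0 < l ∧ ∀ x y : X, x ∈ K → y - x ∈ K → ‖x‖ ≤ l * ‖y‖)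
    -- D is a nonempty closed inductive subset of X
    (D : Set X) (hDclosed : IsClosed D)
    (hDind : ∀ C ⊆ D, C.Nonempty → IsChain (coneLe K) C → ∃ b ∈ D, ∀ c ∈ C, coneLe K c b)
    -- T has nonempty closed bounded values contained in D
    (T : X → Set X)
    (hTval : ∀ x ∈ D, (T x).Nonempty ∧ IsClosed (T x) ∧ Bornology.IsBounded (T x) ∧ T x ⊆ D)
    -- T is isotone (≼-increasing upward)
    (hiso : ∀ x ∈ D, ∀ y ∈ D, coneLe K x y → ∀ z ∈ T x, ∃ w ∈ T y, coneLe K z w)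
    -- T is δ-continuous
    (hTcont : ∀ (u : ℕ → X) (p : X), (∀ n, u n ∈ D) → p ∈ D →
      Filter.Tendsto u Filter.atTop (nhds p) →
      Filter.Tendsto (fun n => Metric.hausdorffDist (T (u n)) (T p)) Filter.atTop (nhds 0))
    -- T maps bounded sets into relatively compact sets
    (hTcomp : ∀ C ⊆ D, Bornology.IsBounded C → IsCompact (closure (⋃ x ∈ C, T x)))
    -- starting points
    (x₀ : X) (hx₀ : x₀ ∈ D) (x₁ : X) (hx₁ : x₁ ∈ T x₀) (h₀₁ : coneLe K x₀ x₁) :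
    ({x | x ∈ D ∧ x ∈ T x}).Nonempty ∧
    (∀ C ⊆ {x | x ∈ D ∧ x ∈ T x}, C.Nonempty → IsChain (coneLe K) C →
      (∃ b, ∀ c ∈ C, coneLe K c b) →
      ∃ s, s ∈ {x | x ∈ D ∧ x ∈ T x} ∧ (∀ c ∈ C, coneLe K c s) ∧
        ∀ b, (∀ c ∈ C, coneLe K c b) → coneLe K s b) ∧
    (∃ m, m ∈ {x | x ∈ D ∧ x ∈ T x} ∧
      ∀ y ∈ {x | x ∈ D ∧ x ∈ T x}, coneLe K m y → m = y) := by
  obtain ⟨l, -, hnorm⟩ := hnormal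
  have hTval' : ∀ x ∈ D, (T x).Nonempty ∧ IsClosed (T x) ∧ Bornology.IsBounded (T x) :=
    fun x hx => ⟨(hTval x hx).1, (hTval x hx).2.1, (hTval x hx).2.2.1⟩
  have hfix : ({x | x ∈ D ∧ x ∈ T x}).Nonempty :=
    exists_fixedPoint hKclosed hK0 hKadd hKpointed hnorm hDclosed hDind hTval'
      (fun x hx => (hTval x hx).2.2.2) hiso hTcont hTcomp hx₀ hx₁ h₀₁
  have hlub := exists_lub_mem_fixedPoints_of_isChain hKclosed hK0 hKadd hnorm hDclosed hTval'
    hTcont hTcomp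
  refine ⟨hfix, hlub, exists_maximal_coneLe_of_isChain hK0 hKadd hKpointed hfix ?_⟩
  intro C hC hne hchain
  obtain ⟨b, -, hb⟩ := hDind C (fun x hx => (hC hx).1) hne hchain
  obtain ⟨s, hs, hCs, -⟩ := hlub C hC hne hchain ⟨b, hb⟩
  exact ⟨s, hs, hCs⟩

/-- Theorem 3.6 (a), (a'): in a normal partially ordered Banach space, for an isotone,
δ-compact set-valued map `T` on a nonempty closed inductive set `D`, with nonempty closed
bounded values in `D`, and with `x₀ ∈ D`, `x₁ ∈ T x₀`, `x₀ ≼ x₁`, the fixed point set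
`𝔉(T) = {x ∈ D | x ∈ T x}` is nonempty and chain-complete, and `T` has a maximal fixed point. -/
theorem setvalued_fixed_points_chainComplete_of_normal
    {X : Type*} [NormedAddCommGroup X] [NormedSpace ℝ X] [CompleteSpace X]
    (K : Set X) (hKclosed : IsClosed K) (hK0 : (0 : X) ∈ K)
    (hKadd : ∀ x ∈ K, ∀ y ∈ K, x + y ∈ K)
    (hKsmul : ∀ c : ℝ, 0 ≤ c → ∀ x ∈ K, c • x ∈ K)
    (hKpointed : ∀ x ∈ K, -x ∈ K → x = 0)
    -- normality of the order
    (hnormal : ∃ l : ℝ, 0 < l ∧ ∀ x y : X, x ∈ K → y - x ∈ K → ‖x‖ ≤ l * ‖y‖)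
    -- D is a nonempty closed inductive subset of X
    (D : Set X) (hDne : D.Nonempty) (hDclosed : IsClosed D)
    (hDind : ∀ C ⊆ D, C.Nonempty → IsChain (coneLe K) C → ∃ b ∈ D, ∀ c ∈ C, coneLe K c b)
    -- T has nonempty closed bounded values contained in D
    (T : X → Set X)
    (hTval : ∀ x ∈ D, (T x).Nonempty ∧ IsClosed (T x) ∧ Bornology.IsBounded (T x) ∧ T x ⊆ D)
    -- T is isotone (≼-increasing upward)
    (hiso : ∀ x ∈ D, ∀ y ∈ D, coneLe K x y → ∀ z ∈ T x, ∃ w ∈ T y, coneLe K z w)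
    -- T is δ-continuous
    (hTcont : ∀ (u : ℕ → X) (p : X), (∀ n, u n ∈ D) → p ∈ D →
      Filter.Tendsto u Filter.atTop (nhds p) →
      Filter.Tendsto (fun n => Metric.hausdorffDist (T (u n)) (T p)) Filter.atTop (nhds 0))
    -- T maps bounded sets into relatively compact sets
    (hTcomp : ∀ C ⊆ D, Bornology.IsBounded C → IsCompact (closure (⋃ x ∈ C, T x)))
    -- starting points
    (x₀ : X) (hx₀ : x₀ ∈ D) (x₁ : X) (hx₁ : x₁ ∈ T x₀) (h₀₁ : coneLe K x₀ x₁) :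
    ({x | x ∈ D ∧ x ∈ T x}).Nonempty ∧
    (∀ C ⊆ {x | x ∈ D ∧ x ∈ T x}, C.Nonempty → IsChain (coneLe K) C →
      (∃ b, ∀ c ∈ C, coneLe K c b) →
      ∃ s, s ∈ {x | x ∈ D ∧ x ∈ T x} ∧ (∀ c ∈ C, coneLe K c s) ∧
        ∀ b, (∀ c ∈ C, coneLe K c b) → coneLe K s b) ∧
    (∃ m, m ∈ {x | x ∈ D ∧ x ∈ T x} ∧
      ∀ y ∈ {x | x ∈ D ∧ x ∈ T x}, coneLe K m y → m = y) :=
  setvalued_fixed_points_chainComplete_of_normal_general K hKclosed hK0 hKadd hKpointed hnormal D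
    hDclosed hDind T hTval hiso hTcont hTcomp x₀ hx₀ x₁ hx₁ h₀₁
end

section
/- Let (X, ‖·‖, ≼) be a normal partially ordered Banach space and let u, v ∈ X with u ≺ v. Let T be an isotone and δ-compact set-valued mapping from the order interval [u, v] = {x ∈ X : u ≼ x ≼ v} to nonempty closed subsets of [u, v]. Then the fixed point set 𝔉(T) = {x ∈ [u,v] : x ∈ T x} is a nonempty bi-chain-complete subset of [u, v], and T has both an ≼-maximal and an ≼-minimal fixed point. (Corollary 3.7) -/
/-- The order interval `[u, v] = {x | u ≼ x ≼ v}` for the order induced by the cone `K`. -/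
def coneIcc {X : Type*} [NormedAddCommGroup X] (K : Set X) (u v : X) : Set X :=
  {x | coneLe K u x ∧ coneLe K x v}

open Filter Topology Metric Set

section OrderTopology

variable {α : Type*} [TopologicalSpace α]

theorem Monotone.isLUB_range_of_mapClusterPt [Preorder α] [ClosedIicTopology α]
    [ClosedIciTopology α] {β : Type*} [Preorder β] [IsDirectedOrder β] [Nonempty β]
    {f : β → α} (hf : Monotone f) {a : α} (ha : MapClusterPt a atTop f) :
    IsLUB (range f) a := by
  rw [mapClusterPt_atTop_iff_forall_mem_closure] at ha
  refine ⟨?_, fun b hb => ?_⟩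
  · rintro _ ⟨i, rfl⟩
    exact closure_minimal (image_subset_iff.2 fun j hj => hf hj) isClosed_Ici (ha i)
  · exact closure_minimal ((image_subset_range _ _).trans hb) isClosed_Iic
      (ha (Classical.arbitrary β))

theorem Monotone.exists_isLUB_tendsto_of_isCompact [PartialOrder α] [ClosedIicTopology α]
    [ClosedIciTopology α] {β : Type*} [Preorder β] [IsDirectedOrder β] [Nonempty β]
    {f : β → α} (hf : Monotone f) {s : Set α} (hs : IsCompact s) (hfs : ∀ b, f b ∈ s) :
    ∃ a, IsLUB (range f) a ∧ Tendsto f atTop (𝓝 a) := by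
  obtain ⟨a, -, ha⟩ := hs.exists_mapClusterPt (f := atTop)
    (tendsto_principal.2 (Eventually.of_forall hfs))
  have hlub := hf.isLUB_range_of_mapClusterPt ha
  exact ⟨a, hlub, hs.tendsto_nhds_of_unique_mapClusterPt (Eventually.of_forall hfs)
    fun b _ hb => (hf.isLUB_range_of_mapClusterPt hb).unique hlub⟩

variable [PartialOrder α] [OrderClosedTopology α]

theorem IsCompact.exists_isLUB_mem_of_directedOn {F C : Set α} (hF : IsCompact F)
    (hCF : C ⊆ F) (hC : DirectedOn (· ≤ ·) C) (hne : C.Nonempty) : ∃ p ∈ F, IsLUB C p := by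
  have := hC.isDirectedOrder
  have := hne.to_subtype
  have hmono : Monotone ((↑) : C → α) := fun _ _ h => h
  obtain ⟨p, hlub, hlim⟩ := hmono.exists_isLUB_tendsto_of_isCompact hF fun c => hCF c.2
  rw [Subtype.range_coe] at hlub
  exact ⟨p, hF.isClosed.mem_of_tendsto hlim (Eventually.of_forall fun c => hCF c.2), hlub⟩

theorem IsCompact.exists_isGLB_mem_of_directedOn {F C : Set α} (hF : IsCompact F)
    (hCF : C ⊆ F) (hC : DirectedOn (· ≥ ·) C) (hne : C.Nonempty) : ∃ p ∈ F, IsGLB C p :=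
  IsCompact.exists_isLUB_mem_of_directedOn (α := αᵒᵈ) hF hCF hC hne

theorem IsCompact.exists_maximal {F : Set α} (hF : IsCompact F) (hne : F.Nonempty) :
    ∃ m, Maximal (· ∈ F) m := by
  obtain ⟨x, hx⟩ := hne
  obtain ⟨m, -, hm⟩ := zorn_le_nonempty₀ F (fun C hCF hC y hy => by
    obtain ⟨p, hp, hlub⟩ := hF.exists_isLUB_mem_of_directedOn hCF hC.directedOn ⟨y, hy⟩
    exact ⟨p, hp, hlub.1⟩) x hx
  exact ⟨m, hm⟩

theorem IsCompact.exists_minimal {F : Set α} (hF : IsCompact F) (hne : F.Nonempty) :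
    ∃ m, Minimal (· ∈ F) m :=
  IsCompact.exists_maximal (α := αᵒᵈ) hF hne

end OrderTopology

theorem isClosed_graph_of_tendsto_hausdorffDist {X : Type*} [PseudoMetricSpace X]
    {S : Set X} {T : X → Set X} (hS : IsClosed S) (hTne : ∀ x ∈ S, (T x).Nonempty)
    (hTbdd : ∀ x ∈ S, Bornology.IsBounded (T x)) (hTcl : ∀ x ∈ S, IsClosed (T x))
    (hT : ∀ (w : ℕ → X) (p : X), (∀ n, w n ∈ S) → p ∈ S → Tendsto w atTop (𝓝 p) →
      Tendsto (fun n => hausdorffDist (T (w n)) (T p)) atTop (𝓝 0)) :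
    IsClosed {q : X × X | q.1 ∈ S ∧ q.2 ∈ T q.1} := by
  refine IsSeqClosed.isClosed fun q p hq hqp => ?_
  have hx : Tendsto (fun n => (q n).1) atTop (𝓝 p.1) := (continuous_fst.tendsto p).comp hqp
  have hz : Tendsto (fun n => (q n).2) atTop (𝓝 p.2) := (continuous_snd.tendsto p).comp hqp
  have hpS : p.1 ∈ S := hS.mem_of_tendsto hx (Eventually.of_forall fun n => (hq n).1)
  have hdist : Tendsto (fun n => infDist (q n).2 (T p.1)) atTop (𝓝 0) :=
    squeeze_zero (fun _ => infDist_nonneg)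
      (fun n => infDist_le_hausdorffDist_of_mem (hq n).2
        (hausdorffEDist_ne_top_of_nonempty_of_bounded (hTne _ (hq n).1) (hTne _ hpS)
          (hTbdd _ (hq n).1) (hTbdd _ hpS)))
      (hT _ _ (fun n => (hq n).1) hpS hx)
  refine ⟨hpS, ((hTcl _ hpS).mem_iff_infDist_zero (hTne _ hpS)).2 ?_⟩
  exact tendsto_nhds_unique (((continuous_infDist_pt _).tendsto _).comp hz) hdist

theorem nonempty_fixedPoints_of_isotone {α : Type*} [TopologicalSpace α] [PartialOrder α]
    [ClosedIicTopology α] [ClosedIciTopology α] {S : Set α} {T : α → Set α}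
    (hgraph : IsClosed {q : α × α | q.1 ∈ S ∧ q.2 ∈ T q.1})
    (hcpt : IsCompact (closure (⋃ x ∈ S, T x))) (hTS : ∀ x ∈ S, T x ⊆ S)
    (hiso : ∀ x ∈ S, ∀ y ∈ S, x ≤ y → ∀ z ∈ T x, ∃ w ∈ T y, z ≤ w)
    {u z : α} (hu : u ∈ S) (hz : z ∈ T u) (huz : u ≤ z) : {x | x ∈ S ∧ x ∈ T x}.Nonempty := by
  -- By isotonicity, `T` maps each point of `P` to a point of `P` above it.
  set P := {x | x ∈ S ∧ ∃ z ∈ T x, x ≤ z}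
  have hstep : ∀ x ∈ P, ∃ z ∈ T x, x ≤ z ∧ z ∈ P := by
    rintro x ⟨hxS, z, hz, hxz⟩
    obtain ⟨w, hw, hzw⟩ := hiso x hxS z (hTS x hxS hz) hxz z hz
    exact ⟨z, hz, hxz, hTS x hxS hz, w, hw, hzw⟩
  choose! f hfT hfle hfP using hstep
  set y : ℕ → α := fun n => f^[n] u
  have hyP : ∀ n, y n ∈ P := fun n => MapsTo.iterate (f := f) hfP n ⟨hu, z, hz, huz⟩
  have hyT : ∀ n, y (n + 1) ∈ T (y n) := fun n => by
    simp only [y, Function.iterate_succ_apply']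
    exact hfT _ (hyP n)
  have hmono : Monotone y := monotone_nat_of_le_succ fun n => by
    simp only [y, Function.iterate_succ_apply']
    exact hfle _ (hyP n)
  have hmono_succ : Monotone fun n => y (n + 1) := fun m n h => hmono (Nat.succ_le_succ h)
  obtain ⟨p, -, hlim_succ⟩ := hmono_succ.exists_isLUB_tendsto_of_isCompact hcpt
    fun n => subset_closure (mem_biUnion (hyP n).1 (hyT n))
  have hlim : Tendsto y atTop (𝓝 p) := (tendsto_add_atTop_iff_nat 1).1 hlim_succ
  exact ⟨p, hgraph.mem_of_tendsto (hlim.prodMk_nhds hlim_succ)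
    (Eventually.of_forall fun n => ⟨(hyP n).1, hyT n⟩)⟩

section Cone

variable {X : Type*} [NormedAddCommGroup X]

abbrev conePartialOrder (K : Set X) (hK0 : (0 : X) ∈ K) (hKadd : ∀ x ∈ K, ∀ y ∈ K, x + y ∈ K)
    (hKpointed : ∀ x ∈ K, -x ∈ K → x = 0) : PartialOrder X where
  le := coneLe K
  le_refl x := by simpa [coneLe] using hK0
  le_trans x y z hxy hyz := by simpa [coneLe] using hKadd _ hyz _ hxy
  le_antisymm x y hxy hyx := (sub_eq_zero.1 (hKpointed _ hxy (by simpa [coneLe] using hyx))).symm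

theorem isBounded_coneIcc {K : Set X} {l : ℝ}
    (hl : ∀ x y : X, x ∈ K → y - x ∈ K → ‖x‖ ≤ l * ‖y‖) (u v : X) :
    Bornology.IsBounded (coneIcc K u v) := by
  refine (isBounded_closedBall (x := u) (r := l * ‖v - u‖)).subset fun x hx => ?_
  rw [mem_closedBall, dist_eq_norm]
  exact hl _ _ hx.1 (by simpa [coneLe] using hx.2)

end Cone

theorem setvalued_fixed_points_on_order_interval_general
    {X : Type*} [NormedAddCommGroup X]
    (K : Set X) (hKclosed : IsClosed K) (hK0 : (0 : X) ∈ K)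
    (hKadd : ∀ x ∈ K, ∀ y ∈ K, x + y ∈ K)
    (hKpointed : ∀ x ∈ K, -x ∈ K → x = 0)
    -- normality of the order
    (hnormal : ∃ l : ℝ, 0 < l ∧ ∀ x y : X, x ∈ K → y - x ∈ K → ‖x‖ ≤ l * ‖y‖)
    -- u ≺ v
    (u v : X) (huv : coneLe K u v)
    -- T has nonempty closed values contained in [u, v]
    (T : X → Set X)
    (hTval : ∀ x ∈ coneIcc K u v,
      (T x).Nonempty ∧ IsClosed (T x) ∧ T x ⊆ coneIcc K u v)
    -- T is isotone (≼-increasing upward)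
    (hiso : ∀ x ∈ coneIcc K u v, ∀ y ∈ coneIcc K u v, coneLe K x y →
      ∀ z ∈ T x, ∃ w ∈ T y, coneLe K z w)
    -- T is δ-continuous
    (hTcont : ∀ (w : ℕ → X) (p : X), (∀ n, w n ∈ coneIcc K u v) → p ∈ coneIcc K u v →
      Filter.Tendsto w Filter.atTop (nhds p) →
      Filter.Tendsto (fun n => Metric.hausdorffDist (T (w n)) (T p)) Filter.atTop (nhds 0))
    -- T maps bounded sets into relatively compact sets
    (hTcomp : ∀ C ⊆ coneIcc K u v, Bornology.IsBounded C →
      IsCompact (closure (⋃ x ∈ C, T x))) :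
    ({x | x ∈ coneIcc K u v ∧ x ∈ T x}).Nonempty ∧
    (∀ C ⊆ {x | x ∈ coneIcc K u v ∧ x ∈ T x}, C.Nonempty → IsChain (coneLe K) C →
      (∃ b, ∀ c ∈ C, coneLe K c b) → (∃ a, ∀ c ∈ C, coneLe K a c) →
      (∃ s, s ∈ {x | x ∈ coneIcc K u v ∧ x ∈ T x} ∧ (∀ c ∈ C, coneLe K c s) ∧
        ∀ b, (∀ c ∈ C, coneLe K c b) → coneLe K s b) ∧
      (∃ i, i ∈ {x | x ∈ coneIcc K u v ∧ x ∈ T x} ∧ (∀ c ∈ C, coneLe K i c) ∧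
        ∀ a, (∀ c ∈ C, coneLe K a c) → coneLe K a i)) ∧
    (∃ m, m ∈ {x | x ∈ coneIcc K u v ∧ x ∈ T x} ∧
      ∀ y ∈ {x | x ∈ coneIcc K u v ∧ x ∈ T x}, coneLe K m y → m = y) ∧
    (∃ m', m' ∈ {x | x ∈ coneIcc K u v ∧ x ∈ T x} ∧
      ∀ y ∈ {x | x ∈ coneIcc K u v ∧ x ∈ T x}, coneLe K y m' → m' = y) := by
  let _ : PartialOrder X := conePartialOrder K hK0 hKadd hKpointed
  have : OrderClosedTopology X := ⟨hKclosed.preimage (continuous_snd.sub continuous_fst)⟩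
  obtain ⟨l, -, hl⟩ := hnormal
  have hbdd := isBounded_coneIcc hl u v
  have hgraph := isClosed_graph_of_tendsto_hausdorffDist (isClosed_Icc (a := u) (b := v))
    (fun x hx => (hTval x hx).1) (fun x hx => hbdd.subset (hTval x hx).2.2)
    (fun x hx => (hTval x hx).2.1) hTcont
  have hcpt := hTcomp _ subset_rfl hbdd
  have hF : IsCompact {x | x ∈ coneIcc K u v ∧ x ∈ T x} :=
    hcpt.of_isClosed_subset (hgraph.preimage (continuous_id.prodMk continuous_id))
      fun x hx => subset_closure (mem_biUnion hx.1 hx.2)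
  have hu : u ∈ coneIcc K u v := ⟨le_refl u, huv⟩
  obtain ⟨z, hz⟩ := (hTval u hu).1
  have hne := nonempty_fixedPoints_of_isotone hgraph hcpt (fun x hx => (hTval x hx).2.2) hiso hu hz
    ((hTval u hu).2.2 hz).1
  refine ⟨hne, fun C hCF hC hchain _ _ => ⟨?_, ?_⟩, ?_, ?_⟩
  · obtain ⟨s, hs, hlub⟩ :=
      hF.exists_isLUB_mem_of_directedOn hCF (hchain.directedOn (r := (· ≤ ·))) hC
    exact ⟨s, hs, hlub.1, fun b hb => hlub.2 hb⟩
  · obtain ⟨i, hi, hglb⟩ :=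
      hF.exists_isGLB_mem_of_directedOn hCF (hchain.symm.directedOn (r := (· ≥ ·))) hC
    exact ⟨i, hi, hglb.1, fun a ha => hglb.2 ha⟩
  · obtain ⟨m, hm⟩ := hF.exists_maximal hne
    exact ⟨m, hm.1, fun y hy hmy => le_antisymm hmy (hm.2 hy hmy)⟩
  · obtain ⟨m, hm⟩ := hF.exists_minimal hne
    exact ⟨m, hm.1, fun y hy hym => le_antisymm (hm.2 hy hym) hym⟩

/-- Corollary 3.7: in a normal partially ordered Banach space, for `u ≺ v` and an isotone,
δ-compact set-valued map `T` on the order interval `[u, v]` with nonempty closed values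
contained in `[u, v]`, the fixed point set `𝔉(T)` is a nonempty bi-chain-complete subset of
`[u, v]`, and `T` has a maximal and a minimal fixed point. -/
theorem setvalued_fixed_points_on_order_interval
    {X : Type*} [NormedAddCommGroup X] [NormedSpace ℝ X] [CompleteSpace X]
    (K : Set X) (hKclosed : IsClosed K) (hK0 : (0 : X) ∈ K)
    (hKadd : ∀ x ∈ K, ∀ y ∈ K, x + y ∈ K)
    (hKsmul : ∀ c : ℝ, 0 ≤ c → ∀ x ∈ K, c • x ∈ K)
    (hKpointed : ∀ x ∈ K, -x ∈ K → x = 0)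
    -- normality of the order
    (hnormal : ∃ l : ℝ, 0 < l ∧ ∀ x y : X, x ∈ K → y - x ∈ K → ‖x‖ ≤ l * ‖y‖)
    -- u ≺ v
    (u v : X) (huv : coneLe K u v) (hne : u ≠ v)
    -- T has nonempty closed values contained in [u, v]
    (T : X → Set X)
    (hTval : ∀ x ∈ coneIcc K u v,
      (T x).Nonempty ∧ IsClosed (T x) ∧ T x ⊆ coneIcc K u v)
    -- T is isotone (≼-increasing upward)
    (hiso : ∀ x ∈ coneIcc K u v, ∀ y ∈ coneIcc K u v, coneLe K x y →
      ∀ z ∈ T x, ∃ w ∈ T y, coneLe K z w)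
    -- T is δ-continuous
    (hTcont : ∀ (w : ℕ → X) (p : X), (∀ n, w n ∈ coneIcc K u v) → p ∈ coneIcc K u v →
      Filter.Tendsto w Filter.atTop (nhds p) →
      Filter.Tendsto (fun n => Metric.hausdorffDist (T (w n)) (T p)) Filter.atTop (nhds 0))
    -- T maps bounded sets into relatively compact sets
    (hTcomp : ∀ C ⊆ coneIcc K u v, Bornology.IsBounded C →
      IsCompact (closure (⋃ x ∈ C, T x))) :
    ({x | x ∈ coneIcc K u v ∧ x ∈ T x}).Nonempty ∧
    (∀ C ⊆ {x | x ∈ coneIcc K u v ∧ x ∈ T x}, C.Nonempty → IsChain (coneLe K) C →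
      (∃ b, ∀ c ∈ C, coneLe K c b) → (∃ a, ∀ c ∈ C, coneLe K a c) →
      (∃ s, s ∈ {x | x ∈ coneIcc K u v ∧ x ∈ T x} ∧ (∀ c ∈ C, coneLe K c s) ∧
        ∀ b, (∀ c ∈ C, coneLe K c b) → coneLe K s b) ∧
      (∃ i, i ∈ {x | x ∈ coneIcc K u v ∧ x ∈ T x} ∧ (∀ c ∈ C, coneLe K i c) ∧
        ∀ a, (∀ c ∈ C, coneLe K a c) → coneLe K a i)) ∧
    (∃ m, m ∈ {x | x ∈ coneIcc K u v ∧ x ∈ T x} ∧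
      ∀ y ∈ {x | x ∈ coneIcc K u v ∧ x ∈ T x}, coneLe K m y → m = y) ∧
    (∃ m', m' ∈ {x | x ∈ coneIcc K u v ∧ x ∈ T x} ∧
      ∀ y ∈ {x | x ∈ coneIcc K u v ∧ x ∈ T x}, coneLe K y m' → m' = y) :=
  setvalued_fixed_points_on_order_interval_general K hKclosed hK0 hKadd hKpointed hnormal u v huv T
    hTval hiso hTcont hTcomp
end

section
/- Let (X, ‖·‖, ≼) be a normal partially ordered Banach space and D a nonempty closed inductive subset of X. Let F : D → D be an ≼-increasing compact mapping and suppose there is a point x₀ ∈ D with x₀ ≼ F x₀. Then the fixed point set 𝔉(F) = {x ∈ D : F x = x} is a nonempty chain-complete subset of D, and F has an ≼-maximal fixed point. (Corollary 3.8 (a), (a')) -/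
open Set Filter Topology Function

theorem IsChain.exists_isLUB_mem_closure {α : Type*} [TopologicalSpace α] [Preorder α]
    [ClosedIciTopology α] [ClosedIicTopology α] {C : Set α} (hC : IsChain (· ≤ ·) C)
    (hne : C.Nonempty) (hcpt : IsCompact (closure C)) : ∃ s ∈ closure C, IsLUB C s := by
  have : Nonempty C := hne.to_subtype
  let t : C → Set α := fun c => closure C ∩ Ici (c : α)
  have htd : Directed (· ⊇ ·) t := by
    intro c₁ c₂
    rcases hC.total c₁.2 c₂.2 with h | h
    · exact ⟨c₂, inter_subset_inter_right _ (Ici_subset_Ici.2 h), subset_rfl⟩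
    · exact ⟨c₁, subset_rfl, inter_subset_inter_right _ (Ici_subset_Ici.2 h)⟩
  obtain ⟨s, hs⟩ := IsCompact.nonempty_iInter_of_directed_nonempty_isCompact_isClosed t htd
    (fun c => ⟨c, subset_closure c.2, self_mem_Ici⟩) (fun _ => hcpt.inter_right isClosed_Ici)
    (fun _ => isClosed_closure.inter isClosed_Ici)
  have hsC : s ∈ closure C := (mem_iInter.1 hs (Classical.arbitrary C)).1
  exact ⟨s, hsC, fun c hc => (mem_iInter.1 hs ⟨c, hc⟩).2,
    fun b hb => closure_minimal (fun c hc => hb hc) isClosed_Iic hsC⟩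

theorem IsChain.upperBounds_inter_Ici {α : Type*} [Preorder α] {C : Set α}
    (hC : IsChain (· ≤ ·) C) {c₀ : α} (hc₀ : c₀ ∈ C) :
    upperBounds (C ∩ Ici c₀) = upperBounds C := by
  refine Subset.antisymm (fun b hb c hc => ?_) (upperBounds_mono_set inter_subset_left)
  rcases hC.total hc hc₀ with h | h
  · exact h.trans (hb ⟨hc₀, le_rfl⟩)
  · exact hb ⟨hc, h⟩

theorem isFixedPt_of_tendsto_iterate_of_continuousWithinAt {α : Type*} [TopologicalSpace α]
    [T2Space α] {f : α → α} {s : Set α} {x y : α}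
    (hy : Tendsto (fun n => f^[n] x) atTop (𝓝 y)) (hxs : ∀ n, f^[n] x ∈ s)
    (hf : ContinuousWithinAt f s y) : IsFixedPt f y := by
  refine tendsto_nhds_unique ((tendsto_add_atTop_iff_nat 1).1 ?_) hy
  simp only [iterate_succ' f]
  exact hf.tendsto.comp (tendsto_nhdsWithin_iff.2 ⟨hy, Eventually.of_forall hxs⟩)

theorem monotone_iterate_of_mapsTo_of_monotoneOn {α : Type*} [Preorder α] {D : Set α}
    {F : α → α} (hFmaps : MapsTo F D D) (hFmono : MonotoneOn F D) {x₀ : α} (hx₀ : x₀ ∈ D)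
    (h₀ : x₀ ≤ F x₀) : Monotone fun n => F^[n] x₀ := by
  refine monotone_nat_of_le_succ fun n => ?_
  induction n with
  | zero => exact h₀
  | succ n ih =>
    simpa only [iterate_succ_apply'] using
      hFmono (hFmaps.iterate n hx₀) (hFmaps.iterate (n + 1) hx₀) ih

def IsInductive {α : Type*} [LE α] (D : Set α) : Prop :=
  ∀ C ⊆ D, C.Nonempty → IsChain (· ≤ ·) C → ∃ b ∈ D, ∀ c ∈ C, c ≤ b

def IsNormalOrder (X : Type*) [Norm X] [Zero X] [LE X] : Prop :=
  ∃ l : ℝ, 0 < l ∧ ∀ x y : X, 0 ≤ x → x ≤ y → ‖x‖ ≤ l * ‖y‖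

section NormedOrderedGroup

variable {X : Type*} [NormedAddCommGroup X] [Preorder X] [IsOrderedAddMonoid X]

theorem norm_sub_le_of_le_of_le {l : ℝ} (hl : ∀ x y : X, 0 ≤ x → x ≤ y → ‖x‖ ≤ l * ‖y‖)
    {a x b : X} (hax : a ≤ x) (hxb : x ≤ b) : ‖b - x‖ ≤ (1 + l) * ‖b - a‖ := by
  have hxa : ‖x - a‖ ≤ l * ‖b - a‖ := hl _ _ (sub_nonneg.2 hax) (sub_le_sub_right hxb a)
  calc ‖b - x‖ = ‖(b - a) - (x - a)‖ := by rw [sub_sub_sub_cancel_right]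
    _ ≤ ‖b - a‖ + ‖x - a‖ := norm_sub_le _ _
    _ ≤ (1 + l) * ‖b - a‖ := by linarith

namespace IsNormalOrder

theorem isBounded_Icc (hX : IsNormalOrder X) (a b : X) : Bornology.IsBounded (Icc a b) := by
  obtain ⟨l, -, hl⟩ := hX
  refine isBounded_iff_forall_norm_le.2 ⟨‖b‖ + (1 + l) * ‖b - a‖, fun x hx => ?_⟩
  calc ‖x‖ = ‖b - (b - x)‖ := by rw [sub_sub_cancel]
    _ ≤ ‖b‖ + ‖b - x‖ := norm_sub_le _ _
    _ ≤ ‖b‖ + (1 + l) * ‖b - a‖ := by gcongr; exact norm_sub_le_of_le_of_le hl hx.1 hx.2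

variable [OrderClosedTopology X]

theorem tendsto_of_monotone_of_tendsto_comp (hX : IsNormalOrder X) {u : ℕ → X}
    (hu : Monotone u) {φ : ℕ → ℕ} (hφ : Tendsto φ atTop atTop) {s : X}
    (hs : Tendsto (u ∘ φ) atTop (𝓝 s)) : Tendsto u atTop (𝓝 s) := by
  obtain ⟨l, hl0, hl⟩ := hX
  have hus : ∀ n, u n ≤ s := fun n =>
    ge_of_tendsto hs ((hφ.eventually_ge_atTop n).mono fun k hk => hu hk)
  rw [Metric.tendsto_atTop] at hs ⊢
  intro ε hε
  obtain ⟨k, hk⟩ := hs (ε / (1 + l)) (by positivity)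
  refine ⟨φ k, fun n hn => ?_⟩
  calc dist (u n) s = ‖s - u n‖ := dist_eq_norm' _ _
    _ ≤ (1 + l) * ‖s - u (φ k)‖ := norm_sub_le_of_le_of_le hl (hu hn) (hus n)
    _ < (1 + l) * (ε / (1 + l)) := by
      gcongr
      rw [← dist_eq_norm']
      exact hk k le_rfl
    _ = ε := by field_simp

variable {D : Set X} {F : X → X}

theorem exists_fixedPoint (hX : IsNormalOrder X) (hDclosed : IsClosed D) (hDind : IsInductive D)
    (hFmaps : MapsTo F D D) (hFmono : MonotoneOn F D) (hFcont : ContinuousOn F D)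
    (hFcomp : ∀ C ⊆ D, Bornology.IsBounded C → IsCompact (closure (F '' C)))
    {x₀ : X} (hx₀ : x₀ ∈ D) (h₀ : x₀ ≤ F x₀) : ∃ x ∈ D, IsFixedPt F x := by
  set u : ℕ → X := fun n => F^[n] x₀
  have huD : ∀ n, u n ∈ D := fun n => hFmaps.iterate n hx₀
  have hu : Monotone u := monotone_iterate_of_mapsTo_of_monotoneOn hFmaps hFmono hx₀ h₀
  obtain ⟨b, -, hb⟩ :=
    hDind (range u) (range_subset_iff.2 huD) (range_nonempty u) hu.isChain_range
  have hbdd : Bornology.IsBounded (range u) := (hX.isBounded_Icc (u 0) b).subset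
    (range_subset_iff.2 fun n => ⟨hu n.zero_le, hb _ (mem_range_self n)⟩)
  obtain ⟨s, -, φ, hφ, hs⟩ :=
    (hFcomp _ (range_subset_iff.2 huD) hbdd).tendsto_subseq (x := fun n => u (n + 1))
      fun n => subset_closure ⟨u n, mem_range_self n, (iterate_succ_apply' F n x₀).symm⟩
  have hlim : Tendsto u atTop (𝓝 s) :=
    hX.tendsto_of_monotone_of_tendsto_comp hu ((tendsto_add_atTop_nat 1).comp hφ.tendsto_atTop) hs
  have hsD : s ∈ D := hDclosed.mem_of_tendsto hlim (Eventually.of_forall huD)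
  exact ⟨s, hsD, isFixedPt_of_tendsto_iterate_of_continuousWithinAt hlim huD (hFcont s hsD)⟩

theorem exists_isLUB_fixedPoint (hX : IsNormalOrder X) (hDclosed : IsClosed D)
    (hFcont : ContinuousOn F D)
    (hFcomp : ∀ C ⊆ D, Bornology.IsBounded C → IsCompact (closure (F '' C)))
    {C : Set X} (hCfix : C ⊆ {x | x ∈ D ∧ IsFixedPt F x}) (hne : C.Nonempty)
    (hC : IsChain (· ≤ ·) C) (hbdd : BddAbove C) :
    ∃ s, (s ∈ D ∧ IsFixedPt F s) ∧ IsLUB C s := by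
  obtain ⟨c₀, hc₀⟩ := hne
  obtain ⟨b, hb⟩ := hbdd
  set C' := C ∩ Ici c₀
  have hC'D : C' ⊆ D := fun c hc => (hCfix hc.1).1
  have hC'fix : EqOn F id C' := fun c hc => (hCfix hc.1).2
  have hcpt : IsCompact (closure C') := by
    have hC'bdd : Bornology.IsBounded C' :=
      (hX.isBounded_Icc c₀ b).subset fun c hc => ⟨hc.2, hb hc.1⟩
    simpa only [hC'fix.image_eq_self] using hFcomp C' hC'D hC'bdd
  obtain ⟨s, hsC', hlub⟩ :=
    (hC.mono inter_subset_left).exists_isLUB_mem_closure ⟨c₀, hc₀, le_rfl⟩ hcpt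
  have hclD : closure C' ⊆ D := closure_minimal hC'D hDclosed
  refine ⟨s, ⟨hclD hsC', ?_⟩, ?_⟩
  · exact hC'fix.of_subset_closure (hFcont.mono hclD) continuousOn_id subset_closure subset_rfl hsC'
  · rwa [IsLUB, ← hC.upperBounds_inter_Ici hc₀]

theorem exists_maximal_fixedPoint (hX : IsNormalOrder X) (hDclosed : IsClosed D)
    (hDind : IsInductive D) (hFcont : ContinuousOn F D)
    (hFcomp : ∀ C ⊆ D, Bornology.IsBounded C → IsCompact (closure (F '' C)))
    {p : X} (hp : p ∈ D ∧ IsFixedPt F p) : ∃ m, Maximal (fun x => x ∈ D ∧ IsFixedPt F x) m := by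
  refine (zorn_le_nonempty₀ {x | x ∈ D ∧ IsFixedPt F x} (fun C hCfix hC y hy => ?_) p hp).imp
    fun _ hm => hm.2
  obtain ⟨b, -, hb⟩ := hDind C (fun c hc => (hCfix hc).1) ⟨y, hy⟩ hC
  obtain ⟨s, hs, hlub⟩ :=
    hX.exists_isLUB_fixedPoint hDclosed hFcont hFcomp hCfix ⟨y, hy⟩ hC ⟨b, fun c hc => hb c hc⟩
  exact ⟨s, hs, fun c hc => hlub.1 hc⟩

end IsNormalOrder

end NormedOrderedGroup

theorem singlevalued_fixed_points_chainComplete_of_normal_general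
    {X : Type*} [NormedAddCommGroup X]
    (K : Set X) (hKclosed : IsClosed K) (hK0 : (0 : X) ∈ K)
    (hKadd : ∀ x ∈ K, ∀ y ∈ K, x + y ∈ K)
    (hKpointed : ∀ x ∈ K, -x ∈ K → x = 0)
    -- normality of the order
    (hnormal : ∃ l : ℝ, 0 < l ∧ ∀ x y : X, x ∈ K → y - x ∈ K → ‖x‖ ≤ l * ‖y‖)
    -- D is a nonempty closed inductive subset of X
    (D : Set X) (hDclosed : IsClosed D)
    (hDind : ∀ C ⊆ D, C.Nonempty → IsChain (coneLe K) C → ∃ b ∈ D, ∀ c ∈ C, coneLe K c b)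
    -- F maps D into D and is ≼-increasing
    (F : X → X) (hFmaps : ∀ x ∈ D, F x ∈ D)
    (hFinc : ∀ x ∈ D, ∀ y ∈ D, coneLe K x y → coneLe K (F x) (F y))
    -- F is compact: continuous and maps bounded sets to relatively compact sets
    (hFcont : ContinuousOn F D)
    (hFcomp : ∀ C ⊆ D, Bornology.IsBounded C → IsCompact (closure (F '' C)))
    -- starting point
    (x₀ : X) (hx₀ : x₀ ∈ D) (h₀ : coneLe K x₀ (F x₀)) :
    ({x | x ∈ D ∧ F x = x}).Nonempty ∧
    (∀ C ⊆ {x | x ∈ D ∧ F x = x}, C.Nonempty → IsChain (coneLe K) C →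
      (∃ b, ∀ c ∈ C, coneLe K c b) →
      ∃ s, s ∈ {x | x ∈ D ∧ F x = x} ∧ (∀ c ∈ C, coneLe K c s) ∧
        ∀ b, (∀ c ∈ C, coneLe K c b) → coneLe K s b) ∧
    (∃ m, m ∈ {x | x ∈ D ∧ F x = x} ∧
      ∀ y ∈ {x | x ∈ D ∧ F x = x}, coneLe K m y → m = y) := by
  -- The cone order makes `coneLe K` definitionally `≤`, so the lemmas above apply verbatim.
  let : PartialOrder X :=
    { le := coneLe K
      le_refl := fun x => by simpa [coneLe] using hK0
      le_trans := fun a b c hab hbc => by simpa [coneLe] using hKadd _ hbc _ hab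
      le_antisymm := fun a b hab hba =>
        sub_eq_zero.1 (hKpointed _ hba (by simpa [coneLe] using hab)) }
  have : IsOrderedAddMonoid X :=
    { add_le_add_left := fun a b (hab : b - a ∈ K) c =>
        show b + c - (a + c) ∈ K by rwa [add_sub_add_right_eq_sub] }
  have : OrderClosedTopology X := ⟨hKclosed.preimage (continuous_snd.sub continuous_fst)⟩
  have hX : IsNormalOrder X := by
    obtain ⟨l, hl0, hl⟩ := hnormal
    exact ⟨l, hl0, fun x y hx hxy => hl x y (by simpa using (show x - 0 ∈ K from hx)) hxy⟩
  have hFmono : MonotoneOn F D := fun x hx y hy => hFinc x hx y hy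
  obtain ⟨p, hp⟩ := hX.exists_fixedPoint hDclosed hDind hFmaps hFmono hFcont hFcomp hx₀ h₀
  obtain ⟨m, hm⟩ := hX.exists_maximal_fixedPoint hDclosed hDind hFcont hFcomp hp
  refine ⟨⟨p, hp⟩, fun C hCfix hne hC ⟨b, hb⟩ => ?_, ⟨m, hm.1, fun y hy hmy => ?_⟩⟩
  · obtain ⟨s, hs, hlub⟩ :=
      hX.exists_isLUB_fixedPoint hDclosed hFcont hFcomp hCfix hne hC ⟨b, fun c hc => hb c hc⟩
    exact ⟨s, hs, fun c hc => hlub.1 hc, fun b hb => hlub.2 fun c hc => hb c hc⟩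
  · exact le_antisymm hmy (hm.2 hy hmy)

/-- Corollary 3.8 (a), (a'): in a normal partially ordered Banach space, for an
≼-increasing compact mapping `F : D → D` on a nonempty closed inductive set `D`, with a
point `x₀ ∈ D` such that `x₀ ≼ F x₀`, the fixed point set `𝔉(F)` is a nonempty
chain-complete subset of `D`, and `F` has a maximal fixed point. -/
theorem singlevalued_fixed_points_chainComplete_of_normal
    {X : Type*} [NormedAddCommGroup X] [NormedSpace ℝ X] [CompleteSpace X]
    (K : Set X) (hKclosed : IsClosed K) (hK0 : (0 : X) ∈ K)
    (hKadd : ∀ x ∈ K, ∀ y ∈ K, x + y ∈ K)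
    (hKsmul : ∀ c : ℝ, 0 ≤ c → ∀ x ∈ K, c • x ∈ K)
    (hKpointed : ∀ x ∈ K, -x ∈ K → x = 0)
    -- normality of the order
    (hnormal : ∃ l : ℝ, 0 < l ∧ ∀ x y : X, x ∈ K → y - x ∈ K → ‖x‖ ≤ l * ‖y‖)
    -- D is a nonempty closed inductive subset of X
    (D : Set X) (hDne : D.Nonempty) (hDclosed : IsClosed D)
    (hDind : ∀ C ⊆ D, C.Nonempty → IsChain (coneLe K) C → ∃ b ∈ D, ∀ c ∈ C, coneLe K c b)
    -- F maps D into D and is ≼-increasing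
    (F : X → X) (hFmaps : ∀ x ∈ D, F x ∈ D)
    (hFinc : ∀ x ∈ D, ∀ y ∈ D, coneLe K x y → coneLe K (F x) (F y))
    -- F is compact: continuous and maps bounded sets to relatively compact sets
    (hFcont : ContinuousOn F D)
    (hFcomp : ∀ C ⊆ D, Bornology.IsBounded C → IsCompact (closure (F '' C)))
    -- starting point
    (x₀ : X) (hx₀ : x₀ ∈ D) (h₀ : coneLe K x₀ (F x₀)) :
    ({x | x ∈ D ∧ F x = x}).Nonempty ∧
    (∀ C ⊆ {x | x ∈ D ∧ F x = x}, C.Nonempty → IsChain (coneLe K) C →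
      (∃ b, ∀ c ∈ C, coneLe K c b) →
      ∃ s, s ∈ {x | x ∈ D ∧ F x = x} ∧ (∀ c ∈ C, coneLe K c s) ∧
        ∀ b, (∀ c ∈ C, coneLe K c b) → coneLe K s b) ∧
    (∃ m, m ∈ {x | x ∈ D ∧ F x = x} ∧
      ∀ y ∈ {x | x ∈ D ∧ F x = x}, coneLe K m y → m = y) :=
  singlevalued_fixed_points_chainComplete_of_normal_general K hKclosed hK0 hKadd hKpointed hnormal D
    hDclosed hDind F hFmaps hFinc hFcont hFcomp x₀ hx₀ h₀
end

section
/- Let (X, ‖·‖, ≼) be a normal partially ordered Banach space and D a nonempty closed bi-inductive subset of X. Let F : D → D be an ≼-increasing compact mapping and suppose there is a point x₀ ∈ D with x₀ ≼ F x₀. Then the fixed point set 𝔉(F) = {x ∈ D : F x = x} is a nonempty bi-chain-complete subset of D, and F has both an ≼-maximal and an ≼-minimal fixed point. (Corollary 3.8 (b), (b')) -/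
/-!
The cone order is closed, so the closure of a chain is again a chain, and a nonempty compact
chain has a greatest element. If `C` is a chain of fixed points, bi-inductivity provides order
bounds for `C`, normality turns them into a norm bound, and so `C = F '' C` is relatively compact;
the greatest element of `closure C` is then the supremum of `C`, and it is a fixed point because
the fixed point set of `F` is closed. A fixed point exists at all because the orbit `Fⁿ x₀` is an
increasing chain with compact closure: its greatest element `s` satisfies `s ≼ F s` by
closedness and `F s ≼ s` since `F s` lies in the closure of the orbit. Zorn's lemma, applied to
the order and to its dual, gives maximal and minimal fixed points.
-/

open Set Function Bornology

theorem MonotoneOn.monotone_iterate_of_le_map {α : Type*} [Preorder α] {D : Set α} {F : α → α}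
    (hF : MonotoneOn F D) (hmaps : MapsTo F D D) {x : α} (hx : x ∈ D) (hle : x ≤ F x) :
    Monotone fun n => F^[n] x := by
  refine monotone_nat_of_le_succ fun n => ?_
  induction n with
  | zero => exact hle
  | succ n ih =>
    rw [iterate_succ_apply', iterate_succ_apply' F (n + 1)]
    exact hF (hmaps.iterate n hx) (hmaps.iterate (n + 1) hx) ih

section OrderClosedTopology

variable {α : Type*} [TopologicalSpace α] [PartialOrder α] [OrderClosedTopology α]

theorem isChain_closure {C : Set α} (hC : IsChain (· ≤ ·) C) : IsChain (· ≤ ·) (closure C) := by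
  have hclosed : IsClosed {p : α × α | p.1 ≤ p.2 ∨ p.2 ≤ p.1} :=
    isClosed_le_prod.union isClosed_le_prod'
  have hsub : C ×ˢ C ⊆ {p : α × α | p.1 ≤ p.2 ∨ p.2 ≤ p.1} := fun p hp => hC.total hp.1 hp.2
  intro x hx y hy _
  have hxy : (x, y) ∈ closure (C ×ˢ C) := by
    rw [closure_prod_eq]
    exact ⟨hx, hy⟩
  exact closure_minimal hsub hclosed hxy

theorem IsCompact.exists_isGreatest_of_isChain {S : Set α} (hS : IsCompact S) (hne : S.Nonempty)
    (hch : IsChain (· ≤ ·) S) : ∃ s, IsGreatest S s := by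
  have : Nonempty S := hne.to_subtype
  have hdir : Directed (· ⊇ ·) fun x : S => S ∩ Ici (x : α) := by
    intro x y
    obtain ⟨z, hz, hxz, hyz⟩ := hch.directedOn x x.2 y y.2
    exact ⟨⟨z, hz⟩, fun w hw => ⟨hw.1, hxz.trans hw.2⟩, fun w hw => ⟨hw.1, hyz.trans hw.2⟩⟩
  obtain ⟨s, hs⟩ := IsCompact.nonempty_iInter_of_directed_nonempty_isCompact_isClosed _ hdir
    (fun x => ⟨x, x.2, le_rfl⟩) (fun _ => hS.inter_right isClosed_Ici)
    (fun _ => hS.isClosed.inter isClosed_Ici)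
  simp only [mem_iInter, mem_inter_iff, mem_Ici] at hs
  exact ⟨s, (hs this.some).1, fun x hx => (hs ⟨x, hx⟩).2⟩

theorem exists_isLUB_mem_closure_of_isChain {C : Set α} (hC : IsChain (· ≤ ·) C)
    (hne : C.Nonempty) (hcpt : IsCompact (closure C)) : ∃ s ∈ closure C, IsLUB C s := by
  obtain ⟨s, hs⟩ := hcpt.exists_isGreatest_of_isChain hne.closure (isChain_closure hC)
  exact ⟨s, hs.1, (isLUB_congr (upperBounds_closure C)).1 hs.isLUB⟩

end OrderClosedTopology

section FixedPoints

variable {α : Type*} [TopologicalSpace α] {D : Set α} {F : α → α}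

theorem IsClosed.isClosed_isFixedPt [T2Space α] (hD : IsClosed D) (hF : ContinuousOn F D) :
    IsClosed {x | x ∈ D ∧ F x = x} :=
  (hF.prodMk continuousOn_id).preimage_isClosed_of_isClosed hD isClosed_diagonal

variable [PartialOrder α] [OrderClosedTopology α]

theorem exists_isLUB_mem_fixedPoints_of_isChain (hD : IsClosed D) (hF : ContinuousOn F D)
    {C : Set α} (hC : C ⊆ {x | x ∈ D ∧ F x = x}) (hne : C.Nonempty) (hch : IsChain (· ≤ ·) C)
    (hcpt : IsCompact (closure (F '' C))) : ∃ s ∈ {x | x ∈ D ∧ F x = x}, IsLUB C s := by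
  have hFC : F '' C = C := EqOn.image_eq_self fun x hx => (hC hx).2
  obtain ⟨s, hs, hlub⟩ := exists_isLUB_mem_closure_of_isChain hch hne (hFC ▸ hcpt)
  exact ⟨s, closure_minimal hC (hD.isClosed_isFixedPt hF) hs, hlub⟩

theorem exists_isGLB_mem_fixedPoints_of_isChain (hD : IsClosed D) (hF : ContinuousOn F D)
    {C : Set α} (hC : C ⊆ {x | x ∈ D ∧ F x = x}) (hne : C.Nonempty) (hch : IsChain (· ≤ ·) C)
    (hcpt : IsCompact (closure (F '' C))) : ∃ s ∈ {x | x ∈ D ∧ F x = x}, IsGLB C s :=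
  exists_isLUB_mem_fixedPoints_of_isChain (α := αᵒᵈ) hD hF hC hne hch.symm hcpt

theorem exists_fixedPt_of_le_apply (hD : IsClosed D) (hmaps : MapsTo F D D)
    (hmono : MonotoneOn F D) (hF : ContinuousOn F D)
    (hcpt : ∀ C ⊆ D, C.Nonempty → IsChain (· ≤ ·) C → IsCompact (closure (F '' C)))
    {x₀ : α} (hx₀ : x₀ ∈ D) (h₀ : x₀ ≤ F x₀) : {x | x ∈ D ∧ F x = x}.Nonempty := by
  set O := range fun n => F^[n] x₀
  have hOD : O ⊆ D := range_subset_iff.2 fun n => hmaps.iterate n hx₀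
  have hmono_orbit := hmono.monotone_iterate_of_le_map hmaps hx₀ h₀
  have hO : IsChain (· ≤ ·) O := hmono_orbit.isChain_range
  have hOne : O.Nonempty := range_nonempty _
  have hFO : F '' O ⊆ O := by
    rintro _ ⟨_, ⟨n, rfl⟩, rfl⟩
    exact ⟨n + 1, iterate_succ_apply' F n x₀⟩
  have hOF : O ⊆ insert x₀ (F '' O) := by
    rintro _ ⟨_ | n, rfl⟩
    · exact mem_insert _ _
    · exact mem_insert_of_mem _ ⟨_, mem_range_self n, (iterate_succ_apply' F n x₀).symm⟩
  have hOcpt : IsCompact (closure O) :=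
    have hcpt' := (hcpt O hOD hOne hO).insert x₀
    hcpt'.of_isClosed_subset isClosed_closure
      (closure_minimal (hOF.trans (insert_subset_insert subset_closure)) hcpt'.isClosed)
  obtain ⟨s, hsO, hsmax⟩ := hOcpt.exists_isGreatest_of_isChain hOne.closure (isChain_closure hO)
  have hclD : closure O ⊆ D := closure_minimal hOD hD
  have hle_map : O ⊆ {x | x ∈ D ∧ x ≤ F x} := by
    rintro _ ⟨n, rfl⟩
    exact ⟨hOD (mem_range_self n), iterate_succ_apply' F n x₀ ▸ hmono_orbit n.le_succ⟩
  have hs_le : s ≤ F s := (closure_minimal hle_map (hD.isClosed_le continuousOn_id hF) hsO).2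
  have hFs : F s ∈ closure O :=
    closure_mono hFO ((hF.mono hclD).image_closure (mem_image_of_mem F hsO))
  exact ⟨s, hclD hsO, le_antisymm (hsmax hFs) hs_le⟩

theorem exists_maximal_fixedPt (hD : IsClosed D) (hF : ContinuousOn F D)
    (hcpt : ∀ C ⊆ D, C.Nonempty → IsChain (· ≤ ·) C → IsCompact (closure (F '' C)))
    (hne : {x | x ∈ D ∧ F x = x}.Nonempty) : ∃ m, Maximal (· ∈ {x | x ∈ D ∧ F x = x}) m := by
  have hchains : ∀ C ⊆ {x | x ∈ D ∧ F x = x}, IsChain (· ≤ ·) C → ∀ y ∈ C,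
      ∃ ub ∈ {x | x ∈ D ∧ F x = x}, ∀ z ∈ C, z ≤ ub := by
    intro C hC hch y hy
    obtain ⟨s, hs, hlub⟩ := exists_isLUB_mem_fixedPoints_of_isChain hD hF hC ⟨y, hy⟩ hch
      (hcpt C (fun x hx => (hC hx).1) ⟨y, hy⟩ hch)
    exact ⟨s, hs, fun z hz => hlub.1 hz⟩
  obtain ⟨w, hw⟩ := hne
  obtain ⟨m, -, hm⟩ := zorn_le_nonempty₀ _ hchains w hw
  exact ⟨m, hm⟩

theorem exists_minimal_fixedPt (hD : IsClosed D) (hF : ContinuousOn F D)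
    (hcpt : ∀ C ⊆ D, C.Nonempty → IsChain (· ≤ ·) C → IsCompact (closure (F '' C)))
    (hne : {x | x ∈ D ∧ F x = x}.Nonempty) : ∃ m, Minimal (· ∈ {x | x ∈ D ∧ F x = x}) m :=
  exists_maximal_fixedPt (α := αᵒᵈ) hD hF (fun C hC hCne hch => hcpt C hC hCne hch.symm) hne

end FixedPoints

theorem isBounded_of_coneLe_bounds {X : Type*} [NormedAddCommGroup X] {K : Set X} {l : ℝ}
    (hnormal : ∀ x y : X, x ∈ K → y - x ∈ K → ‖x‖ ≤ l * ‖y‖) {C : Set X} {a b : X}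
    (ha : ∀ c ∈ C, coneLe K a c) (hb : ∀ c ∈ C, coneLe K c b) : IsBounded C := by
  refine (Metric.isBounded_closedBall (x := a) (r := l * ‖b - a‖)).subset fun c hc => ?_
  rw [Metric.mem_closedBall, dist_eq_norm]
  exact hnormal _ _ (ha c hc) (by rw [sub_sub_sub_cancel_right]; exact hb c hc)

theorem singlevalued_fixed_points_biChainComplete_of_normal_general
    {X : Type*} [NormedAddCommGroup X]
    (K : Set X) (hKclosed : IsClosed K) (hK0 : (0 : X) ∈ K)
    (hKadd : ∀ x ∈ K, ∀ y ∈ K, x + y ∈ K)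
    (hKpointed : ∀ x ∈ K, -x ∈ K → x = 0)
    -- normality of the order
    (hnormal : ∃ l : ℝ, 0 < l ∧ ∀ x y : X, x ∈ K → y - x ∈ K → ‖x‖ ≤ l * ‖y‖)
    -- D is a nonempty closed bi-inductive subset of X
    (D : Set X) (hDclosed : IsClosed D)
    (hDbiInd : ∀ C ⊆ D, C.Nonempty → IsChain (coneLe K) C →
      (∃ b ∈ D, ∀ c ∈ C, coneLe K c b) ∧ (∃ a ∈ D, ∀ c ∈ C, coneLe K a c))
    -- F maps D into D and is ≼-increasing
    (F : X → X) (hFmaps : ∀ x ∈ D, F x ∈ D)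
    (hFinc : ∀ x ∈ D, ∀ y ∈ D, coneLe K x y → coneLe K (F x) (F y))
    -- F is compact: continuous and maps bounded sets to relatively compact sets
    (hFcont : ContinuousOn F D)
    (hFcomp : ∀ C ⊆ D, Bornology.IsBounded C → IsCompact (closure (F '' C)))
    -- starting point
    (x₀ : X) (hx₀ : x₀ ∈ D) (h₀ : coneLe K x₀ (F x₀)) :
    ({x | x ∈ D ∧ F x = x}).Nonempty ∧
    (∀ C ⊆ {x | x ∈ D ∧ F x = x}, C.Nonempty → IsChain (coneLe K) C →
      (∃ b, ∀ c ∈ C, coneLe K c b) → (∃ a, ∀ c ∈ C, coneLe K a c) →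
      (∃ s, s ∈ {x | x ∈ D ∧ F x = x} ∧ (∀ c ∈ C, coneLe K c s) ∧
        ∀ b, (∀ c ∈ C, coneLe K c b) → coneLe K s b) ∧
      (∃ i, i ∈ {x | x ∈ D ∧ F x = x} ∧ (∀ c ∈ C, coneLe K i c) ∧
        ∀ a, (∀ c ∈ C, coneLe K a c) → coneLe K a i)) ∧
    (∃ m, m ∈ {x | x ∈ D ∧ F x = x} ∧
      ∀ y ∈ {x | x ∈ D ∧ F x = x}, coneLe K m y → m = y) ∧
    (∃ m', m' ∈ {x | x ∈ D ∧ F x = x} ∧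
      ∀ y ∈ {x | x ∈ D ∧ F x = x}, coneLe K y m' → m' = y) := by
  obtain ⟨l, -, hnormal⟩ := hnormal
  let P : AddGroupCone X :=
    { carrier := K, add_mem' := fun ha hb => hKadd _ ha _ hb, zero_mem' := hK0,
      eq_zero_of_mem_of_neg_mem' := fun ha hna => hKpointed _ ha hna }
  -- `x ≤ y` now unfolds definitionally to `coneLe K x y`.
  let _ : PartialOrder X := .mkOfAddGroupCone P
  have : OrderClosedTopology X := ⟨hKclosed.preimage (continuous_snd.sub continuous_fst)⟩
  have hcpt : ∀ C ⊆ D, C.Nonempty → IsChain (· ≤ ·) C → IsCompact (closure (F '' C)) := by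
    intro C hCD hne hch
    obtain ⟨⟨b, -, hb⟩, a, -, ha⟩ := hDbiInd C hCD hne hch
    exact hFcomp C hCD (isBounded_of_coneLe_bounds hnormal ha hb)
  have hfix := exists_fixedPt_of_le_apply hDclosed hFmaps hFinc hFcont hcpt hx₀ h₀
  obtain ⟨m, hm⟩ := exists_maximal_fixedPt hDclosed hFcont hcpt hfix
  obtain ⟨m', hm'⟩ := exists_minimal_fixedPt hDclosed hFcont hcpt hfix
  refine ⟨hfix, fun C hC hne hch _ _ => ?_, ⟨m, hm.prop, fun y hy => hm.eq_of_le hy⟩,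
    ⟨m', hm'.prop, fun y hy => hm'.eq_of_ge hy⟩⟩
  have hCcpt := hcpt C (fun x hx => (hC hx).1) hne hch
  obtain ⟨s, hs, hlub⟩ := exists_isLUB_mem_fixedPoints_of_isChain hDclosed hFcont hC hne hch hCcpt
  obtain ⟨i, hi, hglb⟩ := exists_isGLB_mem_fixedPoints_of_isChain hDclosed hFcont hC hne hch hCcpt
  exact ⟨⟨s, hs, fun c hc => hlub.1 hc, fun b hb => hlub.2 hb⟩,
    ⟨i, hi, fun c hc => hglb.1 hc, fun a ha => hglb.2 ha⟩⟩

/-- Corollary 3.8 (b), (b'): in a normal partially ordered Banach space, for an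
≼-increasing compact mapping `F : D → D` on a nonempty closed bi-inductive set `D`, with a
point `x₀ ∈ D` such that `x₀ ≼ F x₀`, the fixed point set `𝔉(F)` is a nonempty
bi-chain-complete subset of `D`, and `F` has both a maximal and a minimal fixed point. -/
theorem singlevalued_fixed_points_biChainComplete_of_normal
    {X : Type*} [NormedAddCommGroup X] [NormedSpace ℝ X] [CompleteSpace X]
    (K : Set X) (hKclosed : IsClosed K) (hK0 : (0 : X) ∈ K)
    (hKadd : ∀ x ∈ K, ∀ y ∈ K, x + y ∈ K)
    (hKsmul : ∀ c : ℝ, 0 ≤ c → ∀ x ∈ K, c • x ∈ K)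
    (hKpointed : ∀ x ∈ K, -x ∈ K → x = 0)
    -- normality of the order
    (hnormal : ∃ l : ℝ, 0 < l ∧ ∀ x y : X, x ∈ K → y - x ∈ K → ‖x‖ ≤ l * ‖y‖)
    -- D is a nonempty closed bi-inductive subset of X
    (D : Set X) (hDne : D.Nonempty) (hDclosed : IsClosed D)
    (hDbiInd : ∀ C ⊆ D, C.Nonempty → IsChain (coneLe K) C →
      (∃ b ∈ D, ∀ c ∈ C, coneLe K c b) ∧ (∃ a ∈ D, ∀ c ∈ C, coneLe K a c))
    -- F maps D into D and is ≼-increasing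
    (F : X → X) (hFmaps : ∀ x ∈ D, F x ∈ D)
    (hFinc : ∀ x ∈ D, ∀ y ∈ D, coneLe K x y → coneLe K (F x) (F y))
    -- F is compact: continuous and maps bounded sets to relatively compact sets
    (hFcont : ContinuousOn F D)
    (hFcomp : ∀ C ⊆ D, Bornology.IsBounded C → IsCompact (closure (F '' C)))
    -- starting point
    (x₀ : X) (hx₀ : x₀ ∈ D) (h₀ : coneLe K x₀ (F x₀)) :
    ({x | x ∈ D ∧ F x = x}).Nonempty ∧
    (∀ C ⊆ {x | x ∈ D ∧ F x = x}, C.Nonempty → IsChain (coneLe K) C →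
      (∃ b, ∀ c ∈ C, coneLe K c b) → (∃ a, ∀ c ∈ C, coneLe K a c) →
      (∃ s, s ∈ {x | x ∈ D ∧ F x = x} ∧ (∀ c ∈ C, coneLe K c s) ∧
        ∀ b, (∀ c ∈ C, coneLe K c b) → coneLe K s b) ∧
      (∃ i, i ∈ {x | x ∈ D ∧ F x = x} ∧ (∀ c ∈ C, coneLe K i c) ∧
        ∀ a, (∀ c ∈ C, coneLe K a c) → coneLe K a i)) ∧
    (∃ m, m ∈ {x | x ∈ D ∧ F x = x} ∧
      ∀ y ∈ {x | x ∈ D ∧ F x = x}, coneLe K m y → m = y) ∧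
    (∃ m', m' ∈ {x | x ∈ D ∧ F x = x} ∧
      ∀ y ∈ {x | x ∈ D ∧ F x = x}, coneLe K y m' → m' = y) :=
  singlevalued_fixed_points_biChainComplete_of_normal_general K hKclosed hK0 hKadd hKpointed hnormal
    D hDclosed hDbiInd F hFmaps hFinc hFcont hFcomp x₀ hx₀ h₀
end

section
/- Let (X, ‖·‖, ≼) be a regular partially ordered Banach space and D a nonempty closed inductive subset of X. Let F : D → D be an ≼-increasing demi-continuous mapping and suppose there is a point x₀ ∈ D with x₀ ≼ F x₀. Then the fixed point set 𝔉(F) = {x ∈ D : F x = x} is a nonempty chain-complete subset of D, and F has an ≼-maximal fixed point. (Theorem 4.1 (a), (a')) -/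
/-! Regularity makes the order complete along chains: if an upper-bounded chain `C` had no
element `c` beyond which all of `C` stays `ε`-close to `c`, one could climb inside `C` by steps of
size at least `ε`, an increasing bounded sequence that does not converge. Chaining such
elements for `ε = 1/(n+1)` gives an increasing sequence in `C` whose limit is the supremum of `C`.
Demicontinuity and closedness of `D` carry the equation `F x = x` to such limits, which yields a
fixed point as the limit of the iterates of `x₀`, the chain-completeness of the fixed point set,
and, by Zorn's lemma, a maximal fixed point. -/

open Filter Topology Set Function

def RegularOrder (X : Type*) [TopologicalSpace X] [Preorder X] : Prop :=
  ∀ u : ℕ → X, Monotone u → BddAbove (range u) → ∃ p, Tendsto u atTop (𝓝 p)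

namespace RegularOrder

variable {X : Type*} [MetricSpace X] [Preorder X]

theorem exists_forall_le_dist_lt (hX : RegularOrder X) {S : Set X} (hne : S.Nonempty)
    (hbdd : BddAbove S) {ε : ℝ} (hε : 0 < ε) :
    ∃ c ∈ S, ∀ c' ∈ S, c ≤ c' → dist c' c < ε := by
  by_contra! h
  choose! g hgS hgle hgdist using h
  obtain ⟨c₀, hc₀⟩ := hne
  set u : ℕ → X := fun n => g^[n] c₀
  have hsucc : ∀ n, u (n + 1) = g (u n) := fun n => iterate_succ_apply' g n c₀
  have huS : ∀ n, u n ∈ S := fun n => (MapsTo.iterate hgS n) hc₀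
  have hu : Monotone u := monotone_nat_of_le_succ fun n => hsucc n ▸ hgle _ (huS n)
  obtain ⟨p, hp⟩ := hX u hu (hbdd.mono (range_subset_iff.2 huS))
  have hstep : Tendsto (fun n => dist (u (n + 1)) (u n)) atTop (𝓝 0) := by
    simpa using (hp.comp (tendsto_add_atTop_nat 1)).dist hp
  obtain ⟨n, hn⟩ := (hstep.eventually (gt_mem_nhds hε)).exists
  exact (hsucc n ▸ hgdist _ (huS n)).not_gt hn

theorem exists_monotone_forall_le_dist_lt (hX : RegularOrder X) {S : Set X} (hne : S.Nonempty)
    (hbdd : BddAbove S) :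
    ∃ d : ℕ → X, Monotone d ∧ (∀ n, d n ∈ S) ∧
      ∀ n, ∀ c ∈ S, d n ≤ c → dist c (d n) < 1 / (n + 1) := by
  have hstep : ∀ n : ℕ, ∀ a ∈ S, ∃ c ∈ S, a ≤ c ∧
      ∀ c' ∈ S, c ≤ c' → dist c' c < 1 / (n + 1) := by
    intro n a ha
    obtain ⟨c, ⟨hcS, hac⟩, hc⟩ := hX.exists_forall_le_dist_lt (S := S ∩ Ici a)
      ⟨a, ha, le_rfl⟩ (hbdd.mono inter_subset_left) (ε := 1 / (n + 1)) (by positivity)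
    exact ⟨c, hcS, hac, fun c' hc' hcc' => hc c' ⟨hc', hac.trans hcc'⟩ hcc'⟩
  choose! g hgS hgle hg using hstep
  obtain ⟨c₀, hc₀⟩ := hne
  let e : ℕ → X := fun n => Nat.rec c₀ g n
  have he : ∀ n, e n ∈ S := fun n => by
    induction n with
    | zero => exact hc₀
    | succ n ih => exact hgS n _ ih
  exact ⟨fun n => e (n + 1), monotone_nat_of_le_succ fun n => hgle _ _ (he (n + 1)),
    fun n => he (n + 1), fun n => hg n _ (he n)⟩

variable [OrderClosedTopology X]

theorem exists_tendsto_isLUB_of_isChain (hX : RegularOrder X) {C : Set X}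
    (hC : IsChain (· ≤ ·) C) (hne : C.Nonempty) (hbdd : BddAbove C) :
    ∃ d : ℕ → X, (∀ n, d n ∈ C) ∧ ∃ s, Tendsto d atTop (𝓝 s) ∧ IsLUB C s := by
  obtain ⟨d, hd, hdC, hdist⟩ := hX.exists_monotone_forall_le_dist_lt hne hbdd
  obtain ⟨s, hs⟩ := hX d hd (hbdd.mono (range_subset_iff.2 hdC))
  refine ⟨d, hdC, s, hs, fun c hc => ?_, fun b hb => le_of_tendsto' hs fun n => hb (hdC n)⟩
  by_cases h : ∃ n, c ≤ d n
  · obtain ⟨n, hn⟩ := h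
    exact hn.trans (hd.ge_of_tendsto hs n)
  · have hdc : ∀ n, d n ≤ c := fun n => (hC.total hc (hdC n)).resolve_left (not_exists.1 h n)
    have hlim : Tendsto d atTop (𝓝 c) :=
      tendsto_iff_dist_tendsto_zero.2 <| squeeze_zero (fun _ => dist_nonneg)
        (fun n => (dist_comm c (d n) ▸ hdist n c hc (hdc n)).le)
        tendsto_one_div_add_atTop_nhds_zero_nat
    exact (tendsto_nhds_unique hlim hs).le

end RegularOrder

abbrev coneOrder {X : Type*} [NormedAddCommGroup X] (K : Set X) (hK0 : (0 : X) ∈ K)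
    (hKadd : ∀ x ∈ K, ∀ y ∈ K, x + y ∈ K) (hKpointed : ∀ x ∈ K, -x ∈ K → x = 0) :
    PartialOrder X where
  le := coneLe K
  le_refl x := by simpa [coneLe] using hK0
  le_trans x y z hxy hyz := by simpa [coneLe] using hKadd _ hyz _ hxy
  le_antisymm x y hxy hyx := (sub_eq_zero.1 (hKpointed _ hxy (by simpa [coneLe] using hyx))).symm

theorem orderClosedTopology_coneOrder {X : Type*} [NormedAddCommGroup X] {K : Set X}
    (hKclosed : IsClosed K) (hK0 : (0 : X) ∈ K) (hKadd : ∀ x ∈ K, ∀ y ∈ K, x + y ∈ K)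
    (hKpointed : ∀ x ∈ K, -x ∈ K → x = 0) :
    @OrderClosedTopology X _ (coneOrder K hK0 hKadd hKpointed).toPreorder :=
  let _ := coneOrder K hK0 hKadd hKpointed
  ⟨hKclosed.preimage (continuous_snd.sub continuous_fst)⟩

def DemicontinuousOn {X : Type*} [NormedAddCommGroup X] [NormedSpace ℝ X] (F : X → X)
    (D : Set X) : Prop :=
  ∀ u : ℕ → X, (∀ n, u n ∈ D) → ∀ p ∈ D, Tendsto u atTop (𝓝 p) →
    ∀ f : X →L[ℝ] ℝ, Tendsto (fun n => f (F (u n))) atTop (𝓝 (f (F p)))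

section FixedPoints

variable {X : Type*} [NormedAddCommGroup X] [NormedSpace ℝ X] {F : X → X} {D : Set X}

theorem DemicontinuousOn.mem_fixedPoints_of_tendsto (hF : DemicontinuousOn F D)
    (hD : IsClosed D) {u : ℕ → X} (hu : ∀ n, u n ∈ D) {p : X} (hup : Tendsto u atTop (𝓝 p))
    (hFu : Tendsto (fun n => F (u n)) atTop (𝓝 p)) : p ∈ {x | x ∈ D ∧ F x = x} := by
  have hp : p ∈ D := hD.mem_of_tendsto hup (Eventually.of_forall hu)
  refine ⟨hp, (SeparatingDual.eq_iff_forall_dual_eq (R := ℝ)).2 fun f => ?_⟩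
  exact tendsto_nhds_unique (hF u hu p hp hup f) ((f.continuous.tendsto p).comp hFu)

variable [Preorder X]

theorem RegularOrder.nonempty_fixedPoints_of_le_map (hX : RegularOrder X) (hD : IsClosed D)
    (hDchain : ∀ C ⊆ D, C.Nonempty → IsChain (· ≤ ·) C → BddAbove C) (hFmaps : MapsTo F D D)
    (hFmono : MonotoneOn F D) (hFdemi : DemicontinuousOn F D) {x₀ : X} (hx₀ : x₀ ∈ D)
    (h₀ : x₀ ≤ F x₀) : ({x | x ∈ D ∧ F x = x}).Nonempty := by
  set u : ℕ → X := fun n => F^[n] x₀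
  have hsucc : ∀ n, u (n + 1) = F (u n) := fun n => iterate_succ_apply' F n x₀
  have huD : ∀ n, u n ∈ D := fun n => hFmaps.iterate n hx₀
  have hu : Monotone u := monotone_nat_of_le_succ fun n => by
    induction n with
    | zero => exact h₀
    | succ n ih => simpa only [hsucc] using hFmono (huD n) (huD (n + 1)) ih
  obtain ⟨p, hp⟩ := hX u hu
    (hDchain _ (range_subset_iff.2 huD) (range_nonempty u) hu.isChain_range)
  exact ⟨p, hFdemi.mem_fixedPoints_of_tendsto hD huD hp
    ((hp.comp (tendsto_add_atTop_nat 1)).congr hsucc)⟩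

variable [OrderClosedTopology X]

theorem RegularOrder.exists_isLUB_mem_fixedPoints (hX : RegularOrder X) (hD : IsClosed D)
    (hFdemi : DemicontinuousOn F D) {C : Set X} (hCfix : C ⊆ {x | x ∈ D ∧ F x = x})
    (hC : IsChain (· ≤ ·) C) (hne : C.Nonempty) (hbdd : BddAbove C) :
    ∃ s ∈ {x | x ∈ D ∧ F x = x}, IsLUB C s := by
  obtain ⟨d, hdC, s, hds, hlub⟩ := hX.exists_tendsto_isLUB_of_isChain hC hne hbdd
  exact ⟨s, hFdemi.mem_fixedPoints_of_tendsto hD (fun n => (hCfix (hdC n)).1) hds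
    (hds.congr fun n => (hCfix (hdC n)).2.symm), hlub⟩

end FixedPoints

theorem demicontinuous_fixed_points_chainComplete_of_regular_general
    {X : Type*} [NormedAddCommGroup X] [NormedSpace ℝ X]
    (K : Set X) (hKclosed : IsClosed K) (hK0 : (0 : X) ∈ K)
    (hKadd : ∀ x ∈ K, ∀ y ∈ K, x + y ∈ K)
    (hKpointed : ∀ x ∈ K, -x ∈ K → x = 0)
    -- regularity: every ≼-increasing ≼-upper-bounded sequence converges in norm
    (hreg : ∀ u : ℕ → X, (∀ n, coneLe K (u n) (u (n + 1))) →
      (∃ b, ∀ n, coneLe K (u n) b) → ∃ p, Filter.Tendsto u Filter.atTop (nhds p))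
    -- D is a nonempty closed inductive subset of X
    (D : Set X) (hDclosed : IsClosed D)
    (hDind : ∀ C ⊆ D, C.Nonempty → IsChain (coneLe K) C → ∃ b ∈ D, ∀ c ∈ C, coneLe K c b)
    -- F maps D into D and is ≼-increasing
    (F : X → X) (hFmaps : ∀ x ∈ D, F x ∈ D)
    (hFinc : ∀ x ∈ D, ∀ y ∈ D, coneLe K x y → coneLe K (F x) (F y))
    -- F is demi-continuous: norm convergence is sent to weak convergence
    (hFdemi : ∀ (u : ℕ → X), (∀ n, u n ∈ D) → ∀ p ∈ D,
      Filter.Tendsto u Filter.atTop (nhds p) →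
      ∀ f : X →L[ℝ] ℝ, Filter.Tendsto (fun n => f (F (u n))) Filter.atTop (nhds (f (F p))))
    -- starting point
    (x₀ : X) (hx₀ : x₀ ∈ D) (h₀ : coneLe K x₀ (F x₀)) :
    ({x | x ∈ D ∧ F x = x}).Nonempty ∧
    (∀ C ⊆ {x | x ∈ D ∧ F x = x}, C.Nonempty → IsChain (coneLe K) C →
      (∃ b, ∀ c ∈ C, coneLe K c b) →
      ∃ s, s ∈ {x | x ∈ D ∧ F x = x} ∧ (∀ c ∈ C, coneLe K c s) ∧
        ∀ b, (∀ c ∈ C, coneLe K c b) → coneLe K s b) ∧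
    (∃ m, m ∈ {x | x ∈ D ∧ F x = x} ∧
      ∀ y ∈ {x | x ∈ D ∧ F x = x}, coneLe K m y → m = y) := by
  let _ := coneOrder K hK0 hKadd hKpointed
  have := orderClosedTopology_coneOrder hKclosed hK0 hKadd hKpointed
  have hX : RegularOrder X := fun u hu ⟨b, hb⟩ =>
    hreg u (fun n => hu (Nat.le_succ n)) ⟨b, fun n => hb (mem_range_self n)⟩
  have hDchain : ∀ C ⊆ D, C.Nonempty → IsChain (· ≤ ·) C → BddAbove C := fun C hCD hne hC =>
    let ⟨b, _, hb⟩ := hDind C hCD hne hC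
    ⟨b, hb⟩
  have hlub := fun C => hX.exists_isLUB_mem_fixedPoints (C := C) hDclosed hFdemi
  obtain ⟨p, hp⟩ := hX.nonempty_fixedPoints_of_le_map hDclosed hDchain hFmaps
    (fun x hx y hy => hFinc x hx y hy) hFdemi hx₀ h₀
  obtain ⟨m, -, hm⟩ := zorn_le_nonempty₀ _ (fun C hCfix hC y hy =>
    let ⟨s, hs, hsC⟩ := hlub C hCfix hC ⟨y, hy⟩ (hDchain C (fun c hc => (hCfix hc).1) ⟨y, hy⟩ hC)
    ⟨s, hs, hsC.1⟩) p hp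
  refine ⟨⟨p, hp⟩, fun C hCfix hne hC ⟨b, hb⟩ => ?_, m, hm.prop, fun y hy hmy =>
    le_antisymm hmy (hm.2 hy hmy)⟩
  obtain ⟨s, hs, hsC⟩ := hlub C hCfix hC hne ⟨b, fun c hc => hb c hc⟩
  exact ⟨s, hs, fun c hc => hsC.1 hc, fun b hb => hsC.2 fun c hc => hb c hc⟩

/-- Theorem 4.1 (a), (a'): in a regular partially ordered Banach space, for an
≼-increasing demi-continuous mapping `F : D → D` on a nonempty closed inductive set `D`,
with a point `x₀ ∈ D` such that `x₀ ≼ F x₀`, the fixed point set `𝔉(F)` is a nonempty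
chain-complete subset of `D`, and `F` has a maximal fixed point. -/
theorem demicontinuous_fixed_points_chainComplete_of_regular
    {X : Type*} [NormedAddCommGroup X] [NormedSpace ℝ X] [CompleteSpace X]
    (K : Set X) (hKclosed : IsClosed K) (hK0 : (0 : X) ∈ K)
    (hKadd : ∀ x ∈ K, ∀ y ∈ K, x + y ∈ K)
    (hKsmul : ∀ c : ℝ, 0 ≤ c → ∀ x ∈ K, c • x ∈ K)
    (hKpointed : ∀ x ∈ K, -x ∈ K → x = 0)
    -- regularity: every ≼-increasing ≼-upper-bounded sequence converges in norm
    (hreg : ∀ u : ℕ → X, (∀ n, coneLe K (u n) (u (n + 1))) →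
      (∃ b, ∀ n, coneLe K (u n) b) → ∃ p, Filter.Tendsto u Filter.atTop (nhds p))
    -- D is a nonempty closed inductive subset of X
    (D : Set X) (hDne : D.Nonempty) (hDclosed : IsClosed D)
    (hDind : ∀ C ⊆ D, C.Nonempty → IsChain (coneLe K) C → ∃ b ∈ D, ∀ c ∈ C, coneLe K c b)
    -- F maps D into D and is ≼-increasing
    (F : X → X) (hFmaps : ∀ x ∈ D, F x ∈ D)
    (hFinc : ∀ x ∈ D, ∀ y ∈ D, coneLe K x y → coneLe K (F x) (F y))
    -- F is demi-continuous: norm convergence is sent to weak convergence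
    (hFdemi : ∀ (u : ℕ → X), (∀ n, u n ∈ D) → ∀ p ∈ D,
      Filter.Tendsto u Filter.atTop (nhds p) →
      ∀ f : X →L[ℝ] ℝ, Filter.Tendsto (fun n => f (F (u n))) Filter.atTop (nhds (f (F p))))
    -- starting point
    (x₀ : X) (hx₀ : x₀ ∈ D) (h₀ : coneLe K x₀ (F x₀)) :
    ({x | x ∈ D ∧ F x = x}).Nonempty ∧
    (∀ C ⊆ {x | x ∈ D ∧ F x = x}, C.Nonempty → IsChain (coneLe K) C →
      (∃ b, ∀ c ∈ C, coneLe K c b) →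
      ∃ s, s ∈ {x | x ∈ D ∧ F x = x} ∧ (∀ c ∈ C, coneLe K c s) ∧
        ∀ b, (∀ c ∈ C, coneLe K c b) → coneLe K s b) ∧
    (∃ m, m ∈ {x | x ∈ D ∧ F x = x} ∧
      ∀ y ∈ {x | x ∈ D ∧ F x = x}, coneLe K m y → m = y) :=
  demicontinuous_fixed_points_chainComplete_of_regular_general K hKclosed hK0 hKadd hKpointed hreg D
    hDclosed hDind F hFmaps hFinc hFdemi x₀ hx₀ h₀
end

section
/- Every regular partially ordered Banach space is bi-chain-complete: every ≼-bounded nonempty chain in X has both a least upper bound and a greatest lower bound in X. (Proposition 2.1) -/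
/-- Auxiliary: least upper bound for an upper-bounded nonempty chain. -/
theorem lub_aux {X : Type*} [NormedAddCommGroup X] [NormedSpace ℝ X] [CompleteSpace X]
    (K : Set X) (hKclosed : IsClosed K) (hK0 : (0 : X) ∈ K)
    (hKadd : ∀ x ∈ K, ∀ y ∈ K, x + y ∈ K)
    (hreg : ∀ u : ℕ → X, (∀ n, coneLe K (u n) (u (n + 1))) →
      (∃ b, ∀ n, coneLe K (u n) b) → ∃ p, Filter.Tendsto u Filter.atTop (nhds p))
    (C : Set X) (hCne : C.Nonempty) (hC : IsChain (coneLe K) C)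
    (hub : ∃ b, ∀ c ∈ C, coneLe K c b) :
    ∃ s : X, (∀ c ∈ C, coneLe K c s) ∧ ∀ b, (∀ c ∈ C, coneLe K c b) → coneLe K s b := by
  classical
  have hrefl : ∀ x : X, coneLe K x x := fun x => by simpa [coneLe] using hK0
  have htrans : ∀ {x y z : X}, coneLe K x y → coneLe K y z → coneLe K x z := by
    intro x y z h1 h2
    have := hKadd _ h2 _ h1
    simpa [coneLe, sub_add_sub_cancel] using this
  have htot : ∀ a ∈ C, ∀ b ∈ C, coneLe K a b ∨ coneLe K b a := by
    intro a ha b hb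
    rcases eq_or_ne a b with rfl | h
    · exact Or.inl (hrefl a)
    · exact hC ha hb h
  obtain ⟨b0, hb0⟩ := hub
  obtain ⟨c0, hc0⟩ := hCne
  -- Step 1: Cauchy-type threshold
  have key : ∀ ε : ℝ, 0 < ε → ∃ t ∈ C, ∀ x ∈ C, coneLe K t x → ∀ y ∈ C,
      coneLe K t y → ‖x - y‖ ≤ ε := by
    by_contra hcon
    push_neg at hcon
    obtain ⟨ε, hε, H⟩ := hcon
    have H2 : ∀ t ∈ C, ∃ p : X × X, p.1 ∈ C ∧ p.2 ∈ C ∧ coneLe K t p.1 ∧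
        coneLe K p.1 p.2 ∧ ε < ‖p.2 - p.1‖ := by
      intro t ht
      obtain ⟨x, hx, htx, y, hy, hty, hxy⟩ := H t ht
      rcases htot x hx y hy with h' | h'
      · exact ⟨(x, y), hx, hy, htx, h', by rwa [norm_sub_rev] at hxy⟩
      · exact ⟨(y, x), hy, hx, hty, h', hxy⟩
    choose! f hf1 hf2 hf3 hf4 hf5 using H2
    set v : ℕ → X × X := fun n => Nat.rec (f c0) (fun _ p => f p.2) n with hv
    have v0 : v 0 = f c0 := rfl
    have vs : ∀ n, v (n + 1) = f (v n).2 := fun n => rfl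
    have hinv : ∀ n, (v n).1 ∈ C ∧ (v n).2 ∈ C := by
      intro n
      induction n with
      | zero => exact ⟨hf1 c0 hc0, hf2 c0 hc0⟩
      | succ k ih => exact ⟨hf1 _ ih.2, hf2 _ ih.2⟩
    have hord : ∀ n, coneLe K (v n).1 (v n).2 := by
      intro n
      cases n with
      | zero => exact hf4 c0 hc0
      | succ k => exact hf4 _ (hinv k).2
    have hgap : ∀ n, ε < ‖(v n).2 - (v n).1‖ := by
      intro n
      cases n with
      | zero => exact hf5 c0 hc0
      | succ k => exact hf5 _ (hinv k).2
    have hlink : ∀ n, coneLe K (v n).2 (v (n + 1)).1 := by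
      intro n
      rw [vs]
      exact hf3 _ (hinv n).2
    set u : ℕ → X := fun n => if n % 2 = 0 then (v (n / 2)).1 else (v (n / 2)).2 with hu
    have hmem : ∀ n, u n ∈ C := by
      intro n
      by_cases h : n % 2 = 0 <;> simp only [hu, h, if_true, if_false, if_pos, if_neg, h]
      · exact (hinv _).1
      · exact (hinv _).2
    have hmono : ∀ n, coneLe K (u n) (u (n + 1)) := by
      intro n
      rcases Nat.even_or_odd n with ⟨k, hk⟩ | ⟨k, hk⟩
      · have h1 : n % 2 = 0 := by omega
        have h2 : (n + 1) % 2 = 1 := by omega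
        have h3 : n / 2 = k := by omega
        have h4 : (n + 1) / 2 = k := by omega
        simp only [hu, h1, h2, h3, h4]
        simpa using hord k
      · have h1 : n % 2 = 1 := by omega
        have h2 : (n + 1) % 2 = 0 := by omega
        have h3 : n / 2 = k := by omega
        have h4 : (n + 1) / 2 = k + 1 := by omega
        simp only [hu, h1, h2, h3, h4]
        simpa using hlink k
    obtain ⟨p, hp⟩ := hreg u hmono ⟨b0, fun n => hb0 _ (hmem n)⟩
    have t1 : Filter.Tendsto (fun k : ℕ => u (2 * k)) Filter.atTop (nhds p) :=
      hp.comp (Filter.tendsto_atTop_atTop.mpr fun b => ⟨b, fun a ha => by omega⟩)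
    have t2 : Filter.Tendsto (fun k : ℕ => u (2 * k + 1)) Filter.atTop (nhds p) :=
      hp.comp (Filter.tendsto_atTop_atTop.mpr fun b => ⟨b, fun a ha => by omega⟩)
    have t3 : Filter.Tendsto (fun k : ℕ => ‖u (2 * k + 1) - u (2 * k)‖)
        Filter.atTop (nhds 0) := by
      have := (t2.sub t1)
      rw [sub_self] at this
      simpa using this.norm
    have hev := t3.eventually (gt_mem_nhds hε)
    obtain ⟨k, hk⟩ := hev.exists
    have hval : u (2 * k + 1) - u (2 * k) = (v k).2 - (v k).1 := by
      have h1 : (2 * k) % 2 = 0 := by omega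
      have h2 : (2 * k + 1) % 2 = 1 := by omega
      have h3 : (2 * k) / 2 = k := by omega
      have h4 : (2 * k + 1) / 2 = k := by omega
      simp only [hu, h1, h2, h3, h4]
      simp
    rw [hval] at hk
    exact absurd hk (not_lt.mpr (hgap k).le)
  -- Step 2: build increasing threshold sequence
  have hs : ∀ n : ℕ, ∃ t ∈ C, ∀ x ∈ C, coneLe K t x → ∀ y ∈ C,
      coneLe K t y → ‖x - y‖ ≤ 1 / (n + 1) := fun n => key _ (by positivity)
  choose s hsC hsP using hs
  set t : ℕ → X := fun n =>
    Nat.rec (s 0) (fun k tk => if coneLe K (s (k + 1)) tk then tk else s (k + 1)) n with htdef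
  have ht0 : t 0 = s 0 := rfl
  have hts : ∀ n, t (n + 1) = if coneLe K (s (n + 1)) (t n) then t n else s (n + 1) :=
    fun n => rfl
  have htC : ∀ n, t n ∈ C := by
    intro n
    induction n with
    | zero => exact hsC 0
    | succ k ih =>
      rw [hts]
      split
      · exact ih
      · exact hsC (k + 1)
  have hst : ∀ n, coneLe K (s n) (t n) := by
    intro n
    cases n with
    | zero => exact hrefl _
    | succ k =>
      rw [hts]
      split
      · assumption
      · exact hrefl _
  have htmono : ∀ n, coneLe K (t n) (t (n + 1)) := by
    intro n
    rw [hts]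
    split
    · exact hrefl _
    · next h =>
      rcases htot (t n) (htC n) (s (n + 1)) (hsC (n + 1)) with h' | h'
      · exact h'
      · exact absurd h' h
  have htle : ∀ n m, n ≤ m → coneLe K (t n) (t m) := by
    intro n m hnm
    induction m, hnm using Nat.le_induction with
    | base => exact hrefl _
    | succ k hk ih => exact htrans ih (htmono k)
  obtain ⟨p, hp⟩ := hreg t htmono ⟨b0, fun n => hb0 _ (htC n)⟩
  have hle_p : ∀ n, coneLe K (t n) p := by
    intro n
    have htend : Filter.Tendsto (fun m => t m - t n) Filter.atTop (nhds (p - t n)) :=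
      hp.sub tendsto_const_nhds
    exact hKclosed.mem_of_tendsto htend
      (Filter.eventually_atTop.mpr ⟨n, fun m hm => htle n m hm⟩)
  refine ⟨p, ?_, ?_⟩
  · intro c hc
    by_cases h : ∃ n, coneLe K c (t n)
    · obtain ⟨n, hn⟩ := h
      exact htrans hn (hle_p n)
    · push_neg at h
      have hcn : ∀ n, coneLe K (t n) c := fun n =>
        (htot _ (htC n) _ hc).resolve_right (h n)
      have hnorm : ∀ n : ℕ, ‖c - t n‖ ≤ 1 / (n + 1) := fun n =>
        hsP n c hc (htrans (hst n) (hcn n)) (t n) (htC n) (hst n)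
      have htc : Filter.Tendsto t Filter.atTop (nhds c) := by
        rw [tendsto_iff_norm_sub_tendsto_zero]
        refine squeeze_zero (fun n => norm_nonneg _) (fun n => ?_)
          tendsto_one_div_add_atTop_nhds_zero_nat
        rw [norm_sub_rev]
        exact hnorm n
      have : c = p := tendsto_nhds_unique htc hp
      simpa [coneLe, this] using hK0
  · intro b hb
    have htend : Filter.Tendsto (fun n => b - t n) Filter.atTop (nhds (b - p)) :=
      tendsto_const_nhds.sub hp
    exact hKclosed.mem_of_tendsto htend
      (Filter.Eventually.of_forall fun n => hb _ (htC n))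

/-- Proposition 2.1: every regular partially ordered Banach space is bi-chain-complete:
every nonempty chain having both an ≼-upper bound and an ≼-lower bound has a least upper
bound and a greatest lower bound. -/
theorem regular_implies_biChainComplete
    {X : Type*} [NormedAddCommGroup X] [NormedSpace ℝ X] [CompleteSpace X]
    (K : Set X) (hKclosed : IsClosed K) (hK0 : (0 : X) ∈ K)
    (hKadd : ∀ x ∈ K, ∀ y ∈ K, x + y ∈ K)
    (hKsmul : ∀ c : ℝ, 0 ≤ c → ∀ x ∈ K, c • x ∈ K)
    (hKpointed : ∀ x ∈ K, -x ∈ K → x = 0)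
    -- regularity: every ≼-increasing ≼-upper-bounded sequence converges in norm
    (hreg : ∀ u : ℕ → X, (∀ n, coneLe K (u n) (u (n + 1))) →
      (∃ b, ∀ n, coneLe K (u n) b) → ∃ p, Filter.Tendsto u Filter.atTop (nhds p))
    -- a nonempty ≼-bounded chain
    (C : Set X) (hCne : C.Nonempty) (hC : IsChain (coneLe K) C)
    (hub : ∃ b, ∀ c ∈ C, coneLe K c b) (hlb : ∃ a, ∀ c ∈ C, coneLe K a c) :
    (∃ s : X, (∀ c ∈ C, coneLe K c s) ∧ ∀ b, (∀ c ∈ C, coneLe K c b) → coneLe K s b) ∧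
    (∃ i : X, (∀ c ∈ C, coneLe K i c) ∧ ∀ a, (∀ c ∈ C, coneLe K a c) → coneLe K a i) := by
  constructor
  · exact lub_aux K hKclosed hK0 hKadd hreg C hCne hC hub
  · -- apply lub_aux to the negated chain
    set C' : Set X := Neg.neg '' C with hC'def
    have hC'ne : C'.Nonempty := hCne.image _
    have hneg : ∀ {a b : X}, coneLe K a b → coneLe K (-b) (-a) := by
      intro a b h
      show (-a) - (-b) ∈ K
      have heq : (-a) - (-b) = b - a := by abel
      rw [heq]; exact h
    have hC' : IsChain (coneLe K) C' := by
      rintro _ ⟨a, ha, rfl⟩ _ ⟨b, hb, rfl⟩ hne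
      have hab : a ≠ b := fun h => hne (by rw [h])
      rcases hC ha hb hab with h | h
      · exact Or.inr (hneg h)
      · exact Or.inl (hneg h)
    have hub' : ∃ b, ∀ c ∈ C', coneLe K c b := by
      obtain ⟨a, ha⟩ := hlb
      exact ⟨-a, by rintro _ ⟨c, hc, rfl⟩; exact hneg (ha c hc)⟩
    obtain ⟨s', hs'1, hs'2⟩ := lub_aux K hKclosed hK0 hKadd hreg C' hC'ne hC' hub'
    refine ⟨-s', ?_, ?_⟩
    · intro c hc
      have := hs'1 (-c) ⟨c, hc, rfl⟩
      simpa [coneLe, sub_neg_eq_add, add_comm] using this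
    · intro a ha
      have hub'' : ∀ c' ∈ C', coneLe K c' (-a) := by
        rintro _ ⟨c, hc, rfl⟩
        exact hneg (ha c hc)
      have := hs'2 (-a) hub''
      have heq : (-a) - s' = -s' - a := by abel
      simpa [coneLe, heq] using this
end

section
/- Let (X, ‖·‖, ≼) be a partially ordered Banach space. If the order ≼ is regular, then it is normal: there exists λ > 0 such that 0 ≼ x ≼ y implies ‖x‖ ≤ λ‖y‖. (part of Theorem 2.2.2 in [10]) -/
/-!
If the order is not normal, rescaling gives `0 ≼ xₙ ≼ yₙ` with `‖xₙ‖ = 1` and `‖yₙ‖ ≤ 2⁻ⁿ`.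
The partial sums of `∑ xₙ` then increase and are bounded above by `∑ yₙ`, which converges
absolutely and lies in the closed cone; but their increments have norm one, so they cannot
converge, contradicting regularity.
-/

open Filter Finset

theorem Filter.Tendsto.tendsto_zero_of_sum_range {G : Type*} [AddCommGroup G] [TopologicalSpace G]
    [ContinuousSub G] {f : ℕ → G} {a : G}
    (h : Tendsto (fun n ↦ ∑ i ∈ range n, f i) atTop (nhds a)) : Tendsto f atTop (nhds 0) := by
  simpa [sum_range_succ_sub_sum] using (h.comp (tendsto_add_atTop_nat 1)).sub h

namespace PointedCone

variable {X : Type*} [NormedAddCommGroup X] [NormedSpace ℝ X] (C : PointedCone ℝ X)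

theorem exists_norm_eq_one_norm_le_of_not_normal
    (h : ¬ ∃ l : ℝ, 0 < l ∧ ∀ x y : X, x ∈ C → y - x ∈ C → ‖x‖ ≤ l * ‖y‖)
    {ε : ℝ} (hε : 0 < ε) : ∃ x y : X, x ∈ C ∧ y - x ∈ C ∧ ‖x‖ = 1 ∧ ‖y‖ ≤ ε := by
  push Not at h
  obtain ⟨x, y, hx, hyx, hlt⟩ := h ε⁻¹ (inv_pos.mpr hε)
  have hx0 : 0 < ‖x‖ := (mul_nonneg (inv_nonneg.mpr hε.le) (norm_nonneg y)).trans_lt hlt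
  have hc : 0 ≤ ‖x‖⁻¹ := inv_nonneg.mpr hx0.le
  refine ⟨‖x‖⁻¹ • x, ‖x‖⁻¹ • y, C.smul_mem hc hx, ?_, norm_smul_inv_norm (norm_pos_iff.mp hx0), ?_⟩
  · simpa only [smul_sub] using C.smul_mem hc hyx
  · rw [norm_smul, norm_inv, norm_norm, inv_mul_le_iff₀ hx0]
    rw [inv_mul_lt_iff₀ hε] at hlt
    linarith

variable {C}

theorem tsum_sub_sum_range_mem (hC : IsClosed (C : Set X)) {x y : ℕ → X}
    (hyx : ∀ n, y n - x n ∈ C) (hy : ∀ n, y n ∈ C) (hsum : Summable y) (n : ℕ) :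
    ∑' k, y k - ∑ k ∈ range n, x k ∈ C := by
  rw [← hsum.sum_add_tsum_nat_add n, add_sub_right_comm, ← sum_sub_distrib]
  exact add_mem (sum_mem fun k _ ↦ hyx k) (tsum_mem hC fun k ↦ hy (k + n))

end PointedCone

theorem regular_implies_normal_general
    {X : Type*} [NormedAddCommGroup X] [NormedSpace ℝ X] [CompleteSpace X]
    (K : Set X) (hKclosed : IsClosed K) (hK0 : (0 : X) ∈ K)
    (hKadd : ∀ x ∈ K, ∀ y ∈ K, x + y ∈ K)
    (hKsmul : ∀ c : ℝ, 0 ≤ c → ∀ x ∈ K, c • x ∈ K)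
    -- regularity: every ≼-increasing ≼-upper-bounded sequence converges in norm
    (hreg : ∀ u : ℕ → X, (∀ n, coneLe K (u n) (u (n + 1))) →
      (∃ b, ∀ n, coneLe K (u n) b) → ∃ p, Filter.Tendsto u Filter.atTop (nhds p)) :
    ∃ l : ℝ, 0 < l ∧ ∀ x y : X, x ∈ K → y - x ∈ K → ‖x‖ ≤ l * ‖y‖ := by
  by_contra hnormal
  let C : PointedCone ℝ X :=
    { carrier := K
      add_mem' := fun hx hy ↦ hKadd _ hx _ hy
      zero_mem' := hK0
      smul_mem' := fun c _ hx ↦ hKsmul c c.2 _ hx }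
  choose x y hx hyx hx1 hy using fun n : ℕ ↦
    C.exists_norm_eq_one_norm_le_of_not_normal hnormal (pow_pos one_half_pos n)
  have hyC : ∀ n, y n ∈ C := fun n ↦ by simpa using add_mem (hyx n) (hx n)
  have hsum : Summable y := .of_norm_bounded summable_geometric_two hy
  obtain ⟨p, hp⟩ := hreg (fun n ↦ ∑ k ∈ range n, x k)
    (fun n ↦ by rw [coneLe, sum_range_succ, add_sub_cancel_left]; exact hx n)
    ⟨∑' k, y k, PointedCone.tsum_sub_sum_range_mem hKclosed hyx hyC hsum⟩
  have hnorm := hp.tendsto_zero_of_sum_range.norm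
  simp only [hx1, norm_zero] at hnorm
  exact one_ne_zero (tendsto_nhds_unique tendsto_const_nhds hnorm)

/-- Part of Theorem 2.2.2 in [10]: in a partially ordered Banach space, if the order is
regular then it is normal: there is `λ > 0` such that `0 ≼ x ≼ y` implies `‖x‖ ≤ λ‖y‖`. -/
theorem regular_implies_normal
    {X : Type*} [NormedAddCommGroup X] [NormedSpace ℝ X] [CompleteSpace X]
    (K : Set X) (hKclosed : IsClosed K) (hK0 : (0 : X) ∈ K)
    (hKadd : ∀ x ∈ K, ∀ y ∈ K, x + y ∈ K)
    (hKsmul : ∀ c : ℝ, 0 ≤ c → ∀ x ∈ K, c • x ∈ K)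
    (hKpointed : ∀ x ∈ K, -x ∈ K → x = 0)
    -- regularity: every ≼-increasing ≼-upper-bounded sequence converges in norm
    (hreg : ∀ u : ℕ → X, (∀ n, coneLe K (u n) (u (n + 1))) →
      (∃ b, ∀ n, coneLe K (u n) b) → ∃ p, Filter.Tendsto u Filter.atTop (nhds p)) :
    ∃ l : ℝ, 0 < l ∧ ∀ x y : X, x ∈ K → y - x ∈ K → ‖x‖ ≤ l * ‖y‖ :=
  regular_implies_normal_general K hKclosed hK0 hKadd hKsmul hreg
end

section
/- Let (X, ‖·‖, ≼) be a partially ordered Banach space. If the order ≼ is fully regular, then it is regular: every ≼-increasing sequence that has an ≼-upper bound converges in norm. (part of Theorem 2.2.2 in [10]) -/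
/-- Part of Theorem 2.2.2 in [10]: in a partially ordered Banach space, if the order is
fully regular (every ≼-increasing norm-bounded sequence converges in norm) then it is
regular (every ≼-increasing ≼-upper-bounded sequence converges in norm). -/
theorem fullyRegular_implies_regular
    {X : Type*} [NormedAddCommGroup X] [NormedSpace ℝ X] [CompleteSpace X]
    (K : Set X) (hKclosed : IsClosed K) (hK0 : (0 : X) ∈ K)
    (hKadd : ∀ x ∈ K, ∀ y ∈ K, x + y ∈ K)
    (hKsmul : ∀ c : ℝ, 0 ≤ c → ∀ x ∈ K, c • x ∈ K)
    (hKpointed : ∀ x ∈ K, -x ∈ K → x = 0)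
    -- full regularity: every ≼-increasing norm-bounded sequence converges in norm
    (hfullreg : ∀ u : ℕ → X, (∀ n, coneLe K (u n) (u (n + 1))) →
      (∃ M : ℝ, ∀ n, ‖u n‖ ≤ M) → ∃ p, Filter.Tendsto u Filter.atTop (nhds p)) :
    ∀ u : ℕ → X, (∀ n, coneLe K (u n) (u (n + 1))) →
      (∃ b, ∀ n, coneLe K (u n) b) → ∃ p, Filter.Tendsto u Filter.atTop (nhds p) := by
  intro u hu hub
  obtain ⟨b, hb⟩ := hub
  -- Step 1: the cone is normal, i.e. the norm is semi-monotone.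
  have hnormal : ∃ N : ℝ, ∀ x y : X, x ∈ K → y - x ∈ K → ‖x‖ ≤ N * ‖y‖ := by
    by_contra hN
    push_neg at hN
    -- select normalized witnesses of non-normality
    have hsel : ∀ k : ℕ, ∃ x y : X, x ∈ K ∧ y ∈ K ∧ ‖x‖ = 1 ∧ ‖x + y‖ ≤ (1/2 : ℝ)^k := by
      intro k
      obtain ⟨a, c, ha, hca, hac⟩ := hN ((2:ℝ)^k)
      have hanorm : 0 < ‖a‖ := lt_of_le_of_lt (by positivity) hac
      refine ⟨‖a‖⁻¹ • a, ‖a‖⁻¹ • (c - a), hKsmul _ (by positivity) _ ha,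
        hKsmul _ (by positivity) _ hca, ?_, ?_⟩
      · rw [norm_smul, norm_inv, norm_norm]
        field_simp
      · have hsum : ‖a‖⁻¹ • a + ‖a‖⁻¹ • (c - a) = ‖a‖⁻¹ • c := by
          rw [← smul_add]; congr 1; abel
        rw [hsum, norm_smul, norm_inv, norm_norm]
        rw [inv_mul_le_iff₀ hanorm, div_pow, one_pow, mul_one_div,
          le_div_iff₀ (by positivity : (0:ℝ) < 2^k)]
        calc ‖c‖ * 2^k = 2^k * ‖c‖ := by ring
          _ ≤ ‖a‖ := le_of_lt hac
    choose x y hxK hyK hx1 hxy using hsel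
    set S : ℕ → X := fun t => ∑ k ∈ Finset.range t, (x k + y k) with hS
    set r : ℕ → X := fun m => S (m/2) + (if m % 2 = 1 then x (m/2) else 0) with hr
    have hre : ∀ t, r (2*t) = S t := by
      intro t
      have h1 : (2*t)/2 = t := by omega
      have h2 : (2*t) % 2 = 0 := by omega
      simp [hr, h1, h2]
    have hro : ∀ t, r (2*t+1) = S t + x t := by
      intro t
      have h1 : (2*t+1)/2 = t := by omega
      have h2 : (2*t+1) % 2 = 1 := by omega
      simp [hr, h1, h2]
    have hSsucc : ∀ t, S (t+1) = S t + (x t + y t) := by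
      intro t; simp [hS, Finset.sum_range_succ]
    -- r is increasing
    have hincr : ∀ m, coneLe K (r m) (r (m+1)) := by
      intro m
      rcases Nat.even_or_odd m with ⟨t, ht⟩ | ⟨t, ht⟩
      · have hm : m = 2*t := by omega
        subst hm
        show r (2*t+1) - r (2*t) ∈ K
        rw [hro, hre, show S t + x t - S t = x t by abel]
        exact hxK t
      · have hm : m = 2*t+1 := by omega
        subst hm
        show r (2*t+1+1) - r (2*t+1) ∈ K
        rw [show 2*t+1+1 = 2*(t+1) by ring, hre, hro, hSsucc,
          show S t + (x t + y t) - (S t + x t) = y t by abel]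
        exact hyK t
    -- r is norm bounded
    have hSbound : ∀ t, ‖S t‖ ≤ 2 := by
      intro t
      calc ‖S t‖ ≤ ∑ k ∈ Finset.range t, ‖x k + y k‖ := norm_sum_le _ _
        _ ≤ ∑ k ∈ Finset.range t, ((1:ℝ)/2)^k :=
            Finset.sum_le_sum (fun k _ => hxy k)
        _ ≤ 2 := sum_geometric_two_le t
    have hrbound : ∀ m, ‖r m‖ ≤ 3 := by
      intro m
      have h1 : ‖(if m % 2 = 1 then x (m/2) else 0 : X)‖ ≤ 1 := by
        split
        · rw [hx1]
        · simp
      calc ‖r m‖ ≤ ‖S (m/2)‖ + ‖(if m % 2 = 1 then x (m/2) else 0 : X)‖ := norm_add_le _ _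
        _ ≤ 2 + 1 := add_le_add (hSbound _) h1
        _ = 3 := by norm_num
    obtain ⟨p, hp⟩ := hfullreg r hincr ⟨3, hrbound⟩
    -- both subsequences converge to p, so differences tend to 0; but each has norm 1
    have h2t : Filter.Tendsto (fun t : ℕ => 2*t) Filter.atTop Filter.atTop :=
      Filter.tendsto_atTop_mono (fun t => by simp only [id_eq]; omega) Filter.tendsto_id
    have h2t1 : Filter.Tendsto (fun t : ℕ => 2*t+1) Filter.atTop Filter.atTop :=
      Filter.tendsto_atTop_mono (fun t => by simp only [id_eq]; omega) Filter.tendsto_id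
    have he : Filter.Tendsto (fun t => r (2*t)) Filter.atTop (nhds p) := hp.comp h2t
    have ho : Filter.Tendsto (fun t => r (2*t+1)) Filter.atTop (nhds p) := hp.comp h2t1
    have hdiff : Filter.Tendsto (fun t => ‖r (2*t+1) - r (2*t)‖) Filter.atTop (nhds ‖p - p‖) :=
      (ho.sub he).norm
    have hconst : (fun t => ‖r (2*t+1) - r (2*t)‖) = fun _ => (1:ℝ) := by
      funext t
      rw [hro, hre, show S t + x t - S t = x t by abel, hx1]
    rw [hconst, sub_self, norm_zero] at hdiff
    have := tendsto_nhds_unique hdiff tendsto_const_nhds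
    norm_num at this
  -- Step 2: use normality to get a norm bound for u
  obtain ⟨N, hNle⟩ := hnormal
  have hmono : ∀ n, coneLe K (u 0) (u n) := by
    intro n
    induction n with
    | zero => show u 0 - u 0 ∈ K; simpa using hK0
    | succ n ih =>
      show u (n+1) - u 0 ∈ K
      have h := hKadd _ (hu n) _ ih
      rwa [show u (n+1) - u n + (u n - u 0) = u (n+1) - u 0 by abel] at h
  have hbound : ∀ n, ‖u n‖ ≤ ‖u 0‖ + N * ‖b - u 0‖ := by
    intro n
    have hmem : (b - u 0) - (u n - u 0) ∈ K := by
      rw [show (b - u 0) - (u n - u 0) = b - u n by abel]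
      exact hb n
    have h1 : ‖u n - u 0‖ ≤ N * ‖b - u 0‖ := hNle _ _ (hmono n) hmem
    calc ‖u n‖ = ‖u 0 + (u n - u 0)‖ := by rw [add_sub_cancel]
      _ ≤ ‖u 0‖ + ‖u n - u 0‖ := norm_add_le _ _
      _ ≤ ‖u 0‖ + N * ‖b - u 0‖ := by linarith
  exact hfullreg u hu ⟨_, hbound⟩
end
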